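/- arXiv:math/0701345 — 7 statements merged into one kernel-verified Lean document; each statement's English description precedes it below -/
import Mathlib

section
/- For every natural number $n \geq 1$ and every $r \geq 1$, $r \cdot \varphi(n) = \sum_{d} \varphi(n d)$, where the sum is over divisors $d$ of $r$ such that $r/d$ is coprime to $n$ (equivalently, $d \mid r$ and $d$ contains every prime factor common to $r$ and $n$ to its full multiplicity in $r$). -/
theorem stmt_1 (n r : ℕ) (hn : 1 ≤ n) (hr : 1 ≤ r) :
    r * Nat.totient n =
      ∑ d ∈ r.divisors.filter (fun d => Nat.Coprime (r / d) n), Nat.totient (n * d) := by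
  induction r using Nat.strong_induction_on with
  | _ r ih =>
  by_cases hc : Nat.Coprime r n
  · have hfilter : r.divisors.filter (fun d => Nat.Coprime (r / d) n) = r.divisors := by
      apply Finset.filter_true_of_mem
      intro d hd
      exact Nat.Coprime.coprime_dvd_left (Nat.div_dvd_of_dvd (Nat.dvd_of_mem_divisors hd)) hc
    rw [hfilter]
    have hcong : ∀ d ∈ r.divisors, Nat.totient (n * d) = Nat.totient n * Nat.totient d := by
      intro d hd
      exact Nat.totient_mul
        ((Nat.Coprime.symm hc).coprime_dvd_right (Nat.dvd_of_mem_divisors hd))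
    rw [Finset.sum_congr rfl hcong, ← Finset.mul_sum, Nat.sum_totient, mul_comm]
  · obtain ⟨p, hp, hpr, hpn⟩ := Nat.Prime.not_coprime_iff_dvd.mp hc
    obtain ⟨s, rfl⟩ := hpr
    have hp0 : p ≠ 0 := hp.ne_zero
    have hs : 1 ≤ s := by
      rcases Nat.eq_zero_or_pos s with h | h
      · simp [h] at hr
      · exact h
    have hlt : s < p * s := by
      nlinarith [hp.two_le]
    have key : ∑ d ∈ (p*s).divisors.filter (fun d => Nat.Coprime ((p*s) / d) n),
        Nat.totient (n * d)
        = ∑ e ∈ s.divisors.filter (fun e => Nat.Coprime (s / e) n),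
        Nat.totient (n * (p * e)) := by
      apply Finset.sum_nbij' (fun d => d / p) (fun e => p * e)
      · intro d hd
        simp only [Finset.mem_filter, Nat.mem_divisors] at hd ⊢
        obtain ⟨⟨hdvd, hne⟩, hcop⟩ := hd
        have hpd : p ∣ d := by
          have : p ∣ d * ((p * s) / d) := by
            rw [Nat.mul_div_cancel' hdvd]
            exact dvd_mul_right p s
          rcases hp.dvd_mul.mp this with h | h
          · exact h
          · exfalso
            have : p ∣ Nat.gcd ((p * s) / d) n := Nat.dvd_gcd h hpn
            rw [hcop] at this
            exact hp.one_lt.ne' (Nat.eq_one_of_dvd_one this ▸ rfl)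
        obtain ⟨e, rfl⟩ := hpd
        rw [Nat.mul_div_cancel_left e hp.pos]
        have hes : e ∣ s := (Nat.mul_dvd_mul_iff_left hp.pos).mp hdvd
        refine ⟨⟨hes, by omega⟩, ?_⟩
        have : s / e = (p * s) / (p * e) := (Nat.mul_div_mul_left s e hp.pos).symm
        rw [this]
        exact hcop
      · intro e he
        simp only [Finset.mem_filter, Nat.mem_divisors] at he ⊢
        obtain ⟨⟨hdvd, hne⟩, hcop⟩ := he
        refine ⟨⟨Nat.mul_dvd_mul_left p hdvd, by positivity⟩, ?_⟩
        rw [Nat.mul_div_mul_left s e hp.pos]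
        exact hcop
      · intro d hd
        simp only [Finset.mem_filter, Nat.mem_divisors] at hd
        obtain ⟨⟨hdvd, hne⟩, hcop⟩ := hd
        have hpd : p ∣ d := by
          have : p ∣ d * ((p * s) / d) := by
            rw [Nat.mul_div_cancel' hdvd]
            exact dvd_mul_right p s
          rcases hp.dvd_mul.mp this with h | h
          · exact h
          · exfalso
            have : p ∣ Nat.gcd ((p * s) / d) n := Nat.dvd_gcd h hpn
            rw [hcop] at this
            exact hp.one_lt.ne' (Nat.eq_one_of_dvd_one this ▸ rfl)
        exact Nat.mul_div_cancel' hpd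
      · intro e he
        exact Nat.mul_div_cancel_left e hp.pos
      · intro d hd
        simp only [Finset.mem_filter, Nat.mem_divisors] at hd
        obtain ⟨⟨hdvd, hne⟩, hcop⟩ := hd
        have hpd : p ∣ d := by
          have : p ∣ d * ((p * s) / d) := by
            rw [Nat.mul_div_cancel' hdvd]
            exact dvd_mul_right p s
          rcases hp.dvd_mul.mp this with h | h
          · exact h
          · exfalso
            have : p ∣ Nat.gcd ((p * s) / d) n := Nat.dvd_gcd h hpn
            rw [hcop] at this
            exact hp.one_lt.ne' (Nat.eq_one_of_dvd_one this ▸ rfl)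
        rw [Nat.mul_div_cancel' hpd]
    rw [key]
    have htot : ∀ e ∈ s.divisors.filter (fun e => Nat.Coprime (s / e) n),
        Nat.totient (n * (p * e)) = p * Nat.totient (n * e) := by
      intro e _
      have h1 : n * (p * e) = p * (n * e) := by ring
      rw [h1]
      exact Nat.totient_mul_of_prime_of_dvd hp (dvd_mul_of_dvd_left hpn e)
    rw [Finset.sum_congr rfl htot, ← Finset.mul_sum, ← ih s hlt hs]
    ring
end

section
/- For all natural numbers $n \geq 1$ and $r \geq 1$, the polynomial identity $\prod_{d=1}^{n-1} \Phi_d(x^r) = \prod_{d \in S} \Phi_d(x)$ holds, where $S = \{d \in \mathbb{N} : d \mid r k \text{ for some } 1 \leq k \leq n-1\}$ and $\Phi_d$ denotes the $d$-th cyclotomic polynomial. -/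
open Polynomial

lemma aux_dvd_iff (e r k : ℕ) (he : e ≠ 0) : e ∣ r * k ↔ e / e.gcd r ∣ k := by
  have hg : 0 < e.gcd r := Nat.gcd_pos_of_pos_left r (Nat.pos_of_ne_zero he)
  have h1 : e.gcd r * (e / e.gcd r) = e := Nat.mul_div_cancel' (Nat.gcd_dvd_left e r)
  have h2 : e.gcd r * (r / e.gcd r) = r := Nat.mul_div_cancel' (Nat.gcd_dvd_right e r)
  have hcop : Nat.Coprime (e / e.gcd r) (r / e.gcd r) := Nat.coprime_div_gcd_div_gcd hg
  constructor
  · intro h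
    have : e.gcd r * (e / e.gcd r) ∣ e.gcd r * ((r / e.gcd r) * k) := by
      rw [h1, ← mul_assoc, h2]; exact h
    exact hcop.dvd_of_dvd_mul_left ((Nat.mul_dvd_mul_iff_left hg).1 this)
  · intro h
    calc e = e.gcd r * (e / e.gcd r) := h1.symm
      _ ∣ r * (e / e.gcd r) := mul_dvd_mul (Nat.gcd_dvd_right e r) dvd_rfl
      _ ∣ r * k := mul_dvd_mul_left r h

lemma aux_key (r : ℕ) (hr : 1 ≤ r) : ∀ n : ℕ, 1 ≤ n →
    (cyclotomic n ℤ).comp (X ^ r) =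
      ∏ e ∈ (Nat.divisors (r * n)).filter (fun e => e / e.gcd r = n), cyclotomic e ℤ := by
  intro n
  induction n using Nat.strong_induction_on with
  | _ n ih =>
    intro hn
    have hrn : 0 < r * n := Nat.mul_pos hr hn
    -- fibers over divisors of r*n agree with fibers over divisors of r*d
    have hfib : ∀ d ∈ n.divisors,
        (Nat.divisors (r * n)).filter (fun e => e / e.gcd r = d) =
        (Nat.divisors (r * d)).filter (fun e => e / e.gcd r = d) := by
      intro d hd
      obtain ⟨hdn, hn0⟩ := Nat.mem_divisors.1 hd
      have hd0 : d ≠ 0 := by rintro rfl; exact absurd (Nat.eq_zero_of_zero_dvd hdn) hn0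
      ext e
      simp only [Finset.mem_filter, Nat.mem_divisors]
      constructor
      · rintro ⟨⟨hdvd, -⟩, hge⟩
        have he0 : e ≠ 0 := by rintro rfl; exact absurd (Nat.eq_zero_of_zero_dvd hdvd) hrn.ne'
        refine ⟨⟨?_, by positivity⟩, hge⟩
        rw [aux_dvd_iff e r d he0, hge]
      · rintro ⟨⟨hdvd, -⟩, hge⟩
        exact ⟨⟨hdvd.trans (mul_dvd_mul_left r hdn), hrn.ne'⟩, hge⟩
    have hmaps : ∀ e ∈ (r * n).divisors, e / e.gcd r ∈ n.divisors := by
      intro e he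
      obtain ⟨hdvd, -⟩ := Nat.mem_divisors.1 he
      have he0 : e ≠ 0 := by rintro rfl; exact absurd (Nat.eq_zero_of_zero_dvd hdvd) hrn.ne'
      exact Nat.mem_divisors.2 ⟨(aux_dvd_iff e r n he0).1 hdvd, (by omega : n ≠ 0)⟩
    have hprod : ∏ d ∈ n.divisors,
        ∏ e ∈ (Nat.divisors (r * n)).filter (fun e => e / e.gcd r = d), cyclotomic e ℤ =
        X ^ (r * n) - 1 := by
      rw [Finset.prod_fiberwise_of_maps_to hmaps, prod_cyclotomic_eq_X_pow_sub_one hrn]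
    have hcomp : ∏ d ∈ n.divisors, (cyclotomic d ℤ).comp (X ^ r) = X ^ (r * n) - 1 := by
      rw [← Polynomial.prod_comp, prod_cyclotomic_eq_X_pow_sub_one hn, sub_comp, X_pow_comp,
        one_comp, ← pow_mul]
    have heq : ∏ d ∈ n.divisors, (cyclotomic d ℤ).comp (X ^ r) =
        ∏ d ∈ n.divisors,
          ∏ e ∈ (Nat.divisors (r * d)).filter (fun e => e / e.gcd r = d), cyclotomic e ℤ := by
      rw [hcomp, ← hprod]
      exact Finset.prod_congr rfl fun d hd => by rw [hfib d hd]
    rw [← Nat.insert_self_properDivisors (by omega : n ≠ 0), Finset.prod_insert Nat.self_notMem_properDivisors,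
      Finset.prod_insert Nat.self_notMem_properDivisors] at heq
    have hproper : ∏ d ∈ n.properDivisors, (cyclotomic d ℤ).comp (X ^ r) =
        ∏ d ∈ n.properDivisors,
          ∏ e ∈ (Nat.divisors (r * d)).filter (fun e => e / e.gcd r = d), cyclotomic e ℤ := by
      refine Finset.prod_congr rfl fun d hd => ?_
      obtain ⟨hdvd, hlt⟩ := Nat.mem_properDivisors.1 hd
      have hd1 : 1 ≤ d := Nat.pos_of_dvd_of_pos hdvd hn
      exact ih d hlt hd1
    rw [hproper] at heq
    have hne : (∏ d ∈ n.properDivisors,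
        ∏ e ∈ (Nat.divisors (r * d)).filter (fun e => e / e.gcd r = d), cyclotomic e ℤ) ≠ 0 := by
      refine Finset.prod_ne_zero_iff.2 fun d _ => Finset.prod_ne_zero_iff.2 fun e _ => ?_
      exact cyclotomic_ne_zero e ℤ
    exact mul_right_cancel₀ hne heq

open Polynomial in
theorem stmt_2 (n r : ℕ) (hn : 1 ≤ n) (hr : 1 ≤ r) :
    ∏ d ∈ Finset.Icc 1 (n - 1), (cyclotomic d ℤ).comp (X ^ r) =
      ∏ d ∈ (Finset.Icc 1 (r * (n - 1))).filter
        (fun d => ∃ k ∈ Finset.Icc 1 (n - 1), d ∣ r * k), cyclotomic d ℤ := by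
  set m := n - 1 with hm
  set S := (Finset.Icc 1 (r * m)).filter (fun d => ∃ k ∈ Finset.Icc 1 m, d ∣ r * k) with hS
  have hmaps : ∀ e ∈ S, e / e.gcd r ∈ Finset.Icc 1 m := by
    intro e he
    simp only [hS, Finset.mem_filter, Finset.mem_Icc] at he
    obtain ⟨⟨he1, -⟩, k, hk, hdvd⟩ := he
    have he0 : e ≠ 0 := by omega
    have hdk : e / e.gcd r ∣ k := (aux_dvd_iff e r k he0).1 hdvd
    have hpos : 1 ≤ e / e.gcd r := by
      have hg : 0 < e.gcd r := Nat.gcd_pos_of_pos_left r (by omega)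
      exact Nat.div_pos (Nat.le_of_dvd (by omega) (Nat.gcd_dvd_left e r)) hg
    obtain ⟨hk1, hk2⟩ := hk
    have : e / e.gcd r ≤ k := Nat.le_of_dvd (by omega) hdk
    simp only [Finset.mem_Icc]
    omega
  have hfib : ∀ d ∈ Finset.Icc 1 m,
      S.filter (fun e => e / e.gcd r = d) =
      (Nat.divisors (r * d)).filter (fun e => e / e.gcd r = d) := by
    intro d hd
    simp only [Finset.mem_Icc] at hd
    have hrd : 0 < r * d := Nat.mul_pos hr (by omega)
    ext e
    simp only [hS, Finset.mem_filter, Finset.mem_Icc, Nat.mem_divisors]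
    constructor
    · rintro ⟨⟨⟨he1, -⟩, -⟩, hge⟩
      have he0 : e ≠ 0 := by omega
      refine ⟨⟨?_, hrd.ne'⟩, hge⟩
      rw [aux_dvd_iff e r d he0, hge]
    · rintro ⟨⟨hdvd, -⟩, hge⟩
      have he0 : e ≠ 0 := by rintro rfl; exact absurd (Nat.eq_zero_of_zero_dvd hdvd) hrd.ne'
      have he1 : 1 ≤ e := by omega
      have hele : e ≤ r * d := Nat.le_of_dvd hrd hdvd
      refine ⟨⟨⟨he1, ?_⟩, ⟨d, ⟨by omega, hd.2⟩, hdvd⟩⟩, hge⟩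
      calc e ≤ r * d := hele
        _ ≤ r * m := Nat.mul_le_mul_left r hd.2
  calc ∏ d ∈ Finset.Icc 1 m, (cyclotomic d ℤ).comp (X ^ r)
      = ∏ d ∈ Finset.Icc 1 m,
          ∏ e ∈ S.filter (fun e => e / e.gcd r = d), cyclotomic e ℤ := by
        refine Finset.prod_congr rfl fun d hd => ?_
        rw [hfib d hd]
        exact aux_key r hr d (Finset.mem_Icc.1 hd).1
    _ = ∏ e ∈ S, cyclotomic e ℤ := Finset.prod_fiberwise_of_maps_to hmaps _
end

section
/- Let $\sigma$ be a prime, $r \geq 1$, and $n \geq 1$. Then $\prod_{d=1}^{n-1} \Phi_{\sigma d}(x^r) = \prod_{d \in T} \Phi_d(x)$, where $T = \{d : d \mid \sigma r k \text{ and } d \nmid r k \text{ for some } 1 \leq k \leq n-1\}$. -/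
open Polynomial in
/-- Key auxiliary lemma: `Φ_m(X^r)` factors as the product of `Φ_d` over divisors `d`
of `m * r` with `d / gcd d r = m`. -/
lemma expand_cyclotomic_aux (r : ℕ) (hr : 1 ≤ r) :
    ∀ m : ℕ, 1 ≤ m →
      (Polynomial.expand ℤ r) (cyclotomic m ℤ) =
        ∏ d ∈ (m * r).divisors.filter (fun d => d / Nat.gcd d r = m), cyclotomic d ℤ := by
  intro m
  induction m using Nat.strong_induction_on with
  | _ m ih =>
    intro hm
    have hmr : m * r ≠ 0 := by positivity
    -- fiber map lands in divisors of m
    have hmaps : ∀ d ∈ (m * r).divisors, d / Nat.gcd d r ∈ m.divisors := by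
      intro d hd
      rw [Nat.mem_divisors] at hd ⊢
      obtain ⟨hdvd, _⟩ := hd
      have hg : 0 < Nat.gcd d r := Nat.gcd_pos_of_pos_right d hr
      have hco : Nat.Coprime (d / Nat.gcd d r) (r / Nat.gcd d r) :=
        Nat.coprime_div_gcd_div_gcd hg
      have hd' : d / Nat.gcd d r * Nat.gcd d r ∣ m * (r / Nat.gcd d r) * Nat.gcd d r := by
        rw [Nat.div_mul_cancel (Nat.gcd_dvd_left d r), mul_assoc,
          Nat.div_mul_cancel (Nat.gcd_dvd_right d r)]
        exact hdvd
      have : d / Nat.gcd d r ∣ m * (r / Nat.gcd d r) :=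
        (Nat.mul_dvd_mul_iff_right hg).mp hd'
      exact ⟨hco.dvd_of_dvd_mul_right this, by omega⟩
    have key := Finset.prod_fiberwise_of_maps_to hmaps (fun d => cyclotomic d ℤ)
    -- the total product equals expand of X^m - 1
    have htot : ∏ d ∈ (m * r).divisors, cyclotomic d ℤ =
        ∏ t ∈ m.divisors, (Polynomial.expand ℤ r) (cyclotomic t ℤ) := by
      rw [prod_cyclotomic_eq_X_pow_sub_one (by positivity) ℤ, ← map_prod,
        prod_cyclotomic_eq_X_pow_sub_one (by omega) ℤ, map_sub, map_one, map_pow,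
        Polynomial.expand_X, ← pow_mul, mul_comm r m]
    -- fibers over proper divisors are computed by the induction hypothesis
    have hfiber : ∀ t ∈ m.properDivisors,
        ∏ d ∈ (m * r).divisors.filter (fun d => d / Nat.gcd d r = t), cyclotomic d ℤ =
          (Polynomial.expand ℤ r) (cyclotomic t ℤ) := by
      intro t ht
      rw [Nat.mem_properDivisors] at ht
      obtain ⟨htm, hlt⟩ := ht
      have htpos : 1 ≤ t := Nat.pos_of_dvd_of_pos htm (by omega)
      have hset : (m * r).divisors.filter (fun d => d / Nat.gcd d r = t) =
          (t * r).divisors.filter (fun d => d / Nat.gcd d r = t) := by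
        ext d
        simp only [Finset.mem_filter, Nat.mem_divisors]
        constructor
        · rintro ⟨⟨hdvd, -⟩, heq⟩
          refine ⟨⟨?_, by positivity⟩, heq⟩
          have : d = t * Nat.gcd d r := by
            rw [← heq, Nat.div_mul_cancel (Nat.gcd_dvd_left d r)]
          rw [this]
          exact mul_dvd_mul_left t (Nat.gcd_dvd_right d r)
        · rintro ⟨⟨hdvd, -⟩, heq⟩
          exact ⟨⟨hdvd.trans (mul_dvd_mul_right htm r), hmr⟩, heq⟩
      rw [hset, ih t hlt htpos]
    -- now split off the top divisor and cancel
    rw [← Nat.insert_self_properDivisors (by omega : m ≠ 0)] at key htot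
    rw [Finset.prod_insert Nat.self_notMem_properDivisors] at key htot
    have hne : ∏ t ∈ m.properDivisors, (Polynomial.expand ℤ r) (cyclotomic t ℤ) ≠ 0 := by
      apply Finset.prod_ne_zero_iff.mpr
      intro t ht
      have : cyclotomic t ℤ ≠ 0 := cyclotomic_ne_zero t ℤ
      intro h
      exact this (Polynomial.expand_injective hr (by rw [h, map_zero]))
    have hproper : ∏ t ∈ m.properDivisors,
        (∏ d ∈ (m * r).divisors.filter (fun d => d / Nat.gcd d r = t), cyclotomic d ℤ) =
        ∏ t ∈ m.properDivisors, (Polynomial.expand ℤ r) (cyclotomic t ℤ) :=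
      Finset.prod_congr rfl hfiber
    rw [hproper] at key
    rw [htot] at key
    exact (mul_right_cancel₀ hne key).symm

open Polynomial in
theorem stmt_3 (σ r n : ℕ) (hσ : Nat.Prime σ) (hr : 1 ≤ r) (hn : 1 ≤ n) :
    ∏ d ∈ Finset.Icc 1 (n - 1), (cyclotomic (σ * d) ℤ).comp (X ^ r) =
      ∏ d ∈ (Finset.Icc 1 (σ * r * (n - 1))).filter
        (fun d => ∃ k ∈ Finset.Icc 1 (n - 1), d ∣ σ * r * k ∧ ¬ d ∣ r * k),
        cyclotomic d ℤ := by
  have hσ2 : 2 ≤ σ := hσ.two_le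
  set S : ℕ → Finset ℕ :=
    fun k => (σ * k * r).divisors.filter (fun d => d / Nat.gcd d r = σ * k) with hS
  have h1 : ∀ k ∈ Finset.Icc 1 (n - 1),
      (cyclotomic (σ * k) ℤ).comp (X ^ r) = ∏ d ∈ S k, cyclotomic d ℤ := by
    intro k hk
    rw [Finset.mem_Icc] at hk
    rw [← Polynomial.expand_eq_comp_X_pow]
    exact expand_cyclotomic_aux r hr (σ * k) (Nat.mul_pos (by omega) hk.1)
  rw [Finset.prod_congr rfl h1]
  have hdisj : (↑(Finset.Icc 1 (n - 1)) : Set ℕ).PairwiseDisjoint S := by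
    intro a _ b _ hab
    apply Finset.disjoint_left.mpr
    intro d hda hdb
    simp only [hS, Finset.mem_filter] at hda hdb
    exact absurd (by omega : σ * a = σ * b) (fun h => hab (by
      have : 0 < σ := by omega
      exact Nat.eq_of_mul_eq_mul_left this h))
  rw [← Finset.prod_biUnion hdisj]
  congr 1
  ext d
  simp only [Finset.mem_biUnion, Finset.mem_filter, Finset.mem_Icc, hS, Nat.mem_divisors]
  constructor
  · rintro ⟨k, hk, ⟨hdvd, hne⟩, heq⟩
    have hkpos : 1 ≤ k := hk.1
    have hdpos : 0 < d := Nat.pos_of_dvd_of_pos hdvd (Nat.pos_of_ne_zero hne)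
    have hdle : d ≤ σ * r * (n - 1) := by
      calc d ≤ σ * k * r := Nat.le_of_dvd (Nat.pos_of_ne_zero hne) hdvd
        _ = σ * r * k := by ring
        _ ≤ σ * r * (n - 1) := Nat.mul_le_mul_left _ hk.2
    refine ⟨⟨hdpos, hdle⟩, k, hk, by rwa [show σ * r * k = σ * k * r by ring], ?_⟩
    intro hdrk
    have hg : 0 < Nat.gcd d r := Nat.gcd_pos_of_pos_right d hr
    have hco : Nat.Coprime (d / Nat.gcd d r) (r / Nat.gcd d r) :=
      Nat.coprime_div_gcd_div_gcd hg
    have hd' : d / Nat.gcd d r * Nat.gcd d r ∣ k * (r / Nat.gcd d r) * Nat.gcd d r := by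
      rw [Nat.div_mul_cancel (Nat.gcd_dvd_left d r), mul_assoc,
        Nat.div_mul_cancel (Nat.gcd_dvd_right d r)]
      rwa [mul_comm r k] at hdrk
    have h2 : d / Nat.gcd d r ∣ k * (r / Nat.gcd d r) :=
      (Nat.mul_dvd_mul_iff_right hg).mp hd'
    have h3 : d / Nat.gcd d r ∣ k := hco.dvd_of_dvd_mul_right h2
    have := Nat.le_of_dvd (by omega) h3
    rw [heq] at this
    nlinarith
  · rintro ⟨⟨hd1, hd2⟩, k, hk, hdvd, hndvd⟩
    have hg : 0 < Nat.gcd d r := Nat.gcd_pos_of_pos_right d hr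
    have hco : Nat.Coprime (d / Nat.gcd d r) (r / Nat.gcd d r) :=
      Nat.coprime_div_gcd_div_gcd hg
    set m := d / Nat.gcd d r with hm
    have hdm : d = m * Nat.gcd d r := by
      rw [hm, Nat.div_mul_cancel (Nat.gcd_dvd_left d r)]
    -- m ∣ σ * k
    have hd' : m * Nat.gcd d r ∣ σ * k * (r / Nat.gcd d r) * Nat.gcd d r := by
      rw [mul_assoc, Nat.div_mul_cancel (Nat.gcd_dvd_right d r), ← hdm]
      rwa [show σ * r * k = σ * k * r by ring] at hdvd
    have h2 : m ∣ σ * k * (r / Nat.gcd d r) := (Nat.mul_dvd_mul_iff_right hg).mp hd'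
    have hmσk : m ∣ σ * k := hco.dvd_of_dvd_mul_right h2
    -- ¬ m ∣ k
    have hmk : ¬ m ∣ k := by
      intro h
      apply hndvd
      rw [hdm, mul_comm r k]
      exact mul_dvd_mul h (Nat.gcd_dvd_right d r)
    -- σ ∣ m
    have hσm : σ ∣ m := by
      by_contra h
      have hcop : Nat.Coprime m σ := (hσ.coprime_iff_not_dvd.mpr h).symm
      exact hmk (hcop.dvd_of_dvd_mul_left hmσk)
    obtain ⟨t, hmt⟩ := hσm
    have htk : t ∣ k := by
      have : σ * t ∣ σ * k := by rwa [← hmt]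
      exact (Nat.mul_dvd_mul_iff_left (by omega : 0 < σ)).mp this
    have htpos : 1 ≤ t := by
      rcases Nat.eq_zero_or_pos t with h | h
      · exfalso; rw [h, mul_zero] at hmt; rw [hmt] at hdm; omega
      · exact h
    have htle : t ≤ n - 1 := le_trans (Nat.le_of_dvd (by omega) htk) hk.2
    refine ⟨t, ⟨htpos, htle⟩, ⟨?_, Nat.mul_ne_zero (Nat.mul_ne_zero (by omega) (by omega)) (by omega)⟩, hmt⟩
    rw [hdm, hmt, mul_assoc, mul_assoc]
    exact mul_dvd_mul_left σ (mul_dvd_mul_left t (Nat.gcd_dvd_right d r))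
end

section
/- Let $\sigma$ be a prime, write $r = \sigma^\tau r'$ with $\sigma \nmid r'$. Then for every $n \geq 1$, $r \cdot \varphi(\sigma n) = \sum_d \varphi(\sigma^{\tau+1} n d)$, where the sum is over divisors $d$ of $r'$ containing every prime factor common to $r'$ and $n$ to its full multiplicity in $r'$. -/
open Finset Nat

lemma tot_pow_mul {p x : ℕ} (hp : p.Prime) (hpx : p ∣ x) (k : ℕ) :
    (p ^ k * x).totient = p ^ k * x.totient := by
  induction k with
  | zero => simp
  | succ k ih =>
      rw [pow_succ, mul_comm (p ^ k) p, mul_assoc,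
        Nat.totient_mul_of_prime_of_dvd hp (Dvd.dvd.mul_left hpx _), ih]
      ring

lemma sum_div_cop_mul {a b : ℕ} (hab : Nat.Coprime a b) (hb : a * b ≠ 0) (f : ℕ → ℕ) :
    ∑ d ∈ (a * b).divisors, f d = ∑ x ∈ a.divisors, ∑ y ∈ b.divisors, f (x * y) := by
  rw [← Finset.sum_product']
  have ha' : a ≠ 0 := by rintro rfl; simp at hb
  have hb' : b ≠ 0 := by rintro rfl; simp at hb
  apply Finset.sum_nbij' (i := fun d => (d.gcd a, d.gcd b)) (j := fun p => p.1 * p.2)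
  · intro d hd
    simp only [Nat.mem_divisors] at hd
    simp [Finset.mem_product, Nat.mem_divisors, Nat.gcd_dvd_right, ha', hb']
  · rintro ⟨x, y⟩ hxy
    simp only [Finset.mem_product, Nat.mem_divisors] at hxy
    exact Nat.mem_divisors.2 ⟨mul_dvd_mul hxy.1.1 hxy.2.1, hb⟩
  · intro d hd
    simp only [Nat.mem_divisors] at hd
    exact (Nat.gcd_mul_gcd_eq_iff_dvd_mul_of_coprime hab).2 hd.1
  · rintro ⟨x, y⟩ hxy
    simp only [Finset.mem_product, Nat.mem_divisors] at hxy
    have hya : Nat.Coprime y a := Nat.Coprime.coprime_dvd_left hxy.2.1 hab.symm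
    have hxb : Nat.Coprime x b := Nat.Coprime.coprime_dvd_left hxy.1.1 hab
    have h1 : (x * y).gcd a = x := by
      rw [Nat.Coprime.gcd_mul_right_cancel x hya, Nat.gcd_eq_left hxy.1.1]
    have h2 : (x * y).gcd b = y := by
      rw [Nat.Coprime.gcd_mul_left_cancel y hxb, Nat.gcd_eq_left hxy.2.1]
    simp [h1, h2]
  · intro d hd
    simp only [Nat.mem_divisors] at hd
    rw [(Nat.gcd_mul_gcd_eq_iff_dvd_mul_of_coprime hab).2 hd.1]

lemma key (n : ℕ) (hn : 0 < n) : ∀ m, 0 < m →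
    ∑ d ∈ m.divisors.filter (fun d => Nat.Coprime (m / d) n), Nat.totient (n * d)
      = m * n.totient := by
  intro m
  induction m using Nat.recOnPrimePow with
  | zero => intro h; exact absurd h (lt_irrefl 0)
  | one => intro _; simp [Nat.divisors_one, Finset.filter_singleton, Nat.coprime_one_left]
  | prime_pow_mul a p k hp hpa hk ih =>
    intro hm
    have ha : 0 < a := Nat.pos_of_ne_zero (by rintro rfl; simp at hm)
    have hpk : (0:ℕ) < p ^ k := pow_pos hp.pos k
    have cop : Nat.Coprime (p ^ k) a :=
      Nat.Coprime.pow_left _ ((Nat.Prime.coprime_iff_not_dvd hp).2 hpa)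
    rw [Finset.sum_filter, sum_div_cop_mul cop hm.ne']
    have hstep : ∀ x ∈ (p ^ k).divisors, ∀ y ∈ a.divisors,
        (if Nat.Coprime (p ^ k * a / (x * y)) n then Nat.totient (n * (x * y)) else 0)
          = (if Nat.Coprime (p ^ k / x) n ∧ Nat.Coprime (a / y) n
              then Nat.totient (n * (x * y)) else 0) := by
      intro x hx y hy
      rw [Nat.mem_divisors] at hx hy
      have e : p ^ k * a / (x * y) = p ^ k / x * (a / y) :=
        (Nat.div_mul_div_comm hx.1 hy.1).symm
      simp only [e, Nat.coprime_mul_iff_left]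
    by_cases hpn : p ∣ n
    · -- only x = p ^ k contributes
      have main : ∀ x ∈ (p ^ k).divisors,
          (∑ y ∈ a.divisors,
            if Nat.Coprime (p ^ k * a / (x * y)) n then Nat.totient (n * (x * y)) else 0)
          = if x = p ^ k then p ^ k * (a * n.totient) else 0 := by
        intro x hx
        have hx' := (Nat.mem_divisors.1 hx).1
        by_cases hxk : x = p ^ k
        · subst hxk
          rw [if_pos rfl]
          calc (∑ y ∈ a.divisors,
              if Nat.Coprime (p ^ k * a / (p ^ k * y)) n then Nat.totient (n * (p ^ k * y)) else 0)
              = ∑ y ∈ a.divisors,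
                if Nat.Coprime (a / y) n then p ^ k * Nat.totient (n * y) else 0 := by
                refine Finset.sum_congr rfl fun y hy => ?_
                have hy' := (Nat.mem_divisors.1 hy).1
                rw [hstep _ hx _ hy]
                have e2 : n * (p ^ k * y) = p ^ k * (n * y) := by ring
                simp only [Nat.div_self hpk, e2,
                  tot_pow_mul hp (Dvd.dvd.mul_right hpn y)]
                simp [Nat.coprime_one_left]
            _ = p ^ k * (a * n.totient) := by
                simp only [← mul_ite_zero, ← Finset.mul_sum]
                rw [← Finset.sum_filter, ih ha]
        · rw [if_neg hxk]
          refine Finset.sum_eq_zero fun y hy => ?_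
          rw [hstep _ hx _ hy, if_neg]
          rintro ⟨h1, -⟩
          have hne : p ^ k / x ≠ 1 := by
            intro h
            have h3 := Nat.div_mul_cancel hx'
            rw [h, one_mul] at h3
            exact hxk h3
          have hdvd : p ∣ p ^ k / x := by
            have h2 : p ^ k / x ∣ p ^ k := Nat.div_dvd_of_dvd hx'
            obtain ⟨j, hj, hj2⟩ := (Nat.dvd_prime_pow hp).1 h2
            rw [hj2]
            refine dvd_pow_self p ?_
            rintro rfl
            rw [pow_zero] at hj2
            exact hne hj2
          exact (Nat.Prime.coprime_iff_not_dvd hp).1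
            (Nat.Coprime.coprime_dvd_left hdvd h1) hpn
      rw [Finset.sum_congr rfl main, Finset.sum_ite_eq' _ (p ^ k),
        if_pos (Nat.mem_divisors.2 ⟨dvd_rfl, hpk.ne'⟩)]
      ring
    · -- p does not divide n
      have hcpn : Nat.Coprime p n := (Nat.Prime.coprime_iff_not_dvd hp).2 hpn
      have main : ∀ x ∈ (p ^ k).divisors,
          (∑ y ∈ a.divisors,
            if Nat.Coprime (p ^ k * a / (x * y)) n then Nat.totient (n * (x * y)) else 0)
          = x.totient * (a * n.totient) := by
        intro x hx
        have hx' := (Nat.mem_divisors.1 hx).1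
        obtain ⟨j, hj, rfl⟩ := (Nat.dvd_prime_pow hp).1 hx'
        calc (∑ y ∈ a.divisors,
            if Nat.Coprime (p ^ k * a / (p ^ j * y)) n then Nat.totient (n * (p ^ j * y)) else 0)
            = ∑ y ∈ a.divisors,
              if Nat.Coprime (a / y) n then (p ^ j).totient * Nat.totient (n * y) else 0 := by
              refine Finset.sum_congr rfl fun y hy => ?_
              have hy' := (Nat.mem_divisors.1 hy).1
              rw [hstep _ hx _ hy]
              have hc1 : Nat.Coprime (p ^ k / p ^ j) n :=
                Nat.Coprime.coprime_dvd_left (Nat.div_dvd_of_dvd hx')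
                  (Nat.Coprime.pow_left _ hcpn)
              have hcy : Nat.Coprime p y :=
                (Nat.Prime.coprime_iff_not_dvd hp).2 fun hd => hpa (hd.trans hy')
              have e2 : n * (p ^ j * y) = p ^ j * (n * y) := by ring
              simp only [e2, Nat.totient_mul (Nat.Coprime.pow_left j (hcpn.mul_right hcy))]
              simp only [and_iff_right hc1]
          _ = (p ^ j).totient * (a * n.totient) := by
              simp only [← mul_ite_zero, ← Finset.mul_sum]
              rw [← Finset.sum_filter, ih ha]
      rw [Finset.sum_congr rfl main, ← Finset.sum_mul, Nat.sum_totient]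
      ring

theorem stmt_4 (σ τ r r' n : ℕ) (hσ : Nat.Prime σ) (hr : r = σ ^ τ * r')
    (hr' : ¬ σ ∣ r') (hn : 1 ≤ n) :
    r * Nat.totient (σ * n) =
      ∑ d ∈ r'.divisors.filter (fun d => Nat.Coprime (r' / d) n),
        Nat.totient (σ ^ (τ + 1) * n * d) := by
  have hr0 : 0 < r' := Nat.pos_of_ne_zero (by rintro rfl; exact hr' (dvd_zero σ))
  have hkey := key (σ * n) (Nat.mul_pos hσ.pos hn) r' hr0
  have hfil : r'.divisors.filter (fun d => Nat.Coprime (r' / d) (σ * n))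
      = r'.divisors.filter (fun d => Nat.Coprime (r' / d) n) := by
    refine Finset.filter_congr fun d hd => ?_
    have hdd := (Nat.mem_divisors.1 hd).1
    have hcσ : Nat.Coprime (r' / d) σ :=
      ((Nat.Prime.coprime_iff_not_dvd hσ).2 fun h =>
        hr' (h.trans (Nat.div_dvd_of_dvd hdd))).symm
    rw [Nat.coprime_mul_iff_right]
    exact ⟨fun h => h.2, fun h => ⟨hcσ, h⟩⟩
  rw [hfil] at hkey
  have hsum : ∀ d, Nat.totient (σ ^ (τ + 1) * n * d) = σ ^ τ * Nat.totient (σ * n * d) := by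
    intro d
    have : σ ^ (τ + 1) * n * d = σ ^ τ * (σ * n * d) := by ring
    rw [this, tot_pow_mul hσ ((dvd_mul_right σ n).mul_right d)]
  calc r * Nat.totient (σ * n) = σ ^ τ * (r' * Nat.totient (σ * n)) := by rw [hr]; ring
    _ = σ ^ τ * ∑ d ∈ r'.divisors.filter (fun d => Nat.Coprime (r' / d) n),
          Nat.totient (σ * n * d) := by rw [← hkey]
    _ = _ := by
        rw [Finset.mul_sum]
        exact Finset.sum_congr rfl fun d _ => (hsum d).symm
end

section
/- For all real $q$ with $|q| < 1$, all complex $a$, and all complex $x$ with $|x| < 1$: $\sum_{n=0}^{\infty} \frac{(a;q)_n}{(q;q)_n} x^n = \frac{(ax;q)_\infty}{(x;q)_\infty}$. -/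
open Complex Filter Finset Topology

/-- The $q$-Pochhammer symbol $(a;q)_n = \prod_{i=0}^{n-1}(1-aq^i)$. -/
def qPoch (a q : ℂ) (n : ℕ) : ℂ := ∏ i ∈ Finset.range n, (1 - a * q ^ i)

/-- The infinite $q$-Pochhammer symbol $(a;q)_\infty = \prod_{i=0}^{\infty}(1-aq^i)$. -/
noncomputable def qPochInf (a q : ℂ) : ℂ := ∏' i : ℕ, (1 - a * q ^ i)

lemma fac_ne (c : ℂ) {q : ℝ} (hq : |q| < 1) (hc : ‖c‖ < 1) (i : ℕ) :
    1 - c * (q : ℂ) ^ i ≠ 0 := by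
  intro h
  have h1 : c * (q : ℂ) ^ i = 1 := by linear_combination -h
  have h2 : ‖c * (q : ℂ) ^ i‖ < 1 := by
    rw [norm_mul, norm_pow, Complex.norm_real, Real.norm_eq_abs]
    calc ‖c‖ * |q| ^ i ≤ ‖c‖ * 1 := by
          apply mul_le_mul_of_nonneg_left (pow_le_one₀ (abs_nonneg q) hq.le)
            (norm_nonneg c)
      _ < 1 := by simpa using hc
  rw [h1] at h2; simp at h2

lemma summable_logQB' (c : ℂ) {q : ℝ} (hq : |q| < 1)
    (hne : ∀ i, 1 - c * (q : ℂ) ^ i ≠ 0) :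
    Summable (fun i : ℕ => Complex.log (1 - c * (q : ℂ) ^ i)) := by
  have hgeo : Summable (fun i : ℕ => (3/2 : ℝ) * (‖c‖ * |q| ^ i)) :=
    ((summable_geometric_of_lt_one (abs_nonneg q) hq).mul_left _).mul_left _
  apply Summable.of_norm_bounded_eventually_nat hgeo
  have h0 : Tendsto (fun i : ℕ => ‖c‖ * |q| ^ i) atTop (𝓝 0) := by
    simpa using (tendsto_pow_atTop_nhds_zero_of_lt_one (abs_nonneg q) hq).const_mul (‖c‖)
  have hev : ∀ᶠ i : ℕ in atTop, ‖c‖ * |q| ^ i ≤ 1/2 := by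
    filter_upwards [h0.eventually (gt_mem_nhds (by norm_num : (0:ℝ) < 1/2))] with i hi
    exact hi.le
  filter_upwards [hev] with i hi
  have he : (1 : ℂ) - c * (q : ℂ) ^ i = 1 + (-(c * (q : ℂ) ^ i)) := by ring
  have hb : ‖-(c * (q : ℂ) ^ i)‖ ≤ 1/2 := by
    rw [norm_neg]
    simpa [norm_mul, norm_pow, Complex.norm_real, Real.norm_eq_abs] using hi
  rw [he]
  calc ‖Complex.log (1 + -(c * (q : ℂ) ^ i))‖ ≤ 3/2 * ‖-(c * (q : ℂ) ^ i)‖ :=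
        Complex.norm_log_one_add_half_le_self hb
    _ = 3/2 * (‖c‖ * |q| ^ i) := by
        rw [norm_neg, norm_mul, norm_pow, Complex.norm_real, Real.norm_eq_abs]

lemma hasProd_poch (c : ℂ) {q : ℝ} (hq : |q| < 1) :
    HasProd (fun i : ℕ => 1 - c * (q : ℂ) ^ i) (qPochInf c q) := by
  by_cases hne : ∀ i, 1 - c * (q : ℂ) ^ i ≠ 0
  · have := Complex.hasProd_of_hasSum_log (fun i => hne i) (summable_logQB' c hq hne).hasSum
    rw [qPochInf, this.tprod_eq]
    exact this
  · push_neg at hne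
    obtain ⟨i₀, hi₀⟩ := hne
    have h0 : HasProd (fun i : ℕ => 1 - c * (q : ℂ) ^ i) 0 := by
      have : ∀ᶠ s : Finset ℕ in atTop, ∏ i ∈ s, (1 - c * (q : ℂ) ^ i) = 0 := by
        filter_upwards [eventually_ge_atTop {i₀}] with s hs
        exact Finset.prod_eq_zero (hs (Finset.mem_singleton_self i₀)) hi₀
      exact Tendsto.congr' (this.mono fun s hs => hs.symm) tendsto_const_nhds
    rwa [qPochInf, h0.tprod_eq]

lemma pochInf_ne (c : ℂ) {q : ℝ} (hq : |q| < 1)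
    (hne : ∀ i, 1 - c * (q : ℂ) ^ i ≠ 0) : qPochInf c q ≠ 0 := by
  have := Complex.cexp_tsum_eq_tprod (f := fun i => 1 - c * (q : ℂ) ^ i)
    (fun i => hne i) (summable_logQB' c hq hne)
  rw [qPochInf, ← this]
  exact Complex.exp_ne_zero _

section coeff

variable (a : ℂ) (q : ℝ)

noncomputable def qbC (n : ℕ) : ℂ := qPoch a q n / qPoch (q : ℂ) q n

variable {q}

lemma den_ne (hq : |q| < 1) (n : ℕ) : qPoch (q : ℂ) q n ≠ 0 := by
  rw [qPoch]
  exact Finset.prod_ne_zero_iff.2 fun i _ =>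
    fac_ne (q : ℂ) hq (by rwa [Complex.norm_real, Real.norm_eq_abs]) i

lemma qbC_zero : qbC a q 0 = 1 := by simp [qbC, qPoch]

lemma qbC_rec (hq : |q| < 1) (n : ℕ) :
    qbC a q (n + 1) = qbC a q n * ((1 - a * (q : ℂ) ^ n) / (1 - (q : ℂ) ^ (n + 1))) := by
  have h1 : qPoch a q (n + 1) = qPoch a q n * (1 - a * (q : ℂ) ^ n) :=
    Finset.prod_range_succ _ n
  have h2 : qPoch (q : ℂ) q (n + 1) = qPoch (q : ℂ) q n * (1 - (q : ℂ) ^ (n + 1)) := by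
    rw [qPoch, Finset.prod_range_succ, ← qPoch, pow_succ']
  have h3 : (1 : ℂ) - (q : ℂ) ^ (n + 1) ≠ 0 := by
    simpa [pow_succ'] using fac_ne (q : ℂ) hq (by rwa [Complex.norm_real, Real.norm_eq_abs]) n
  rw [qbC, qbC, h1, h2]
  field_simp

lemma summable_qbC (hq : |q| < 1) {y : ℂ} (hy : ‖y‖ < 1) :
    Summable (fun n : ℕ => qbC a q n * y ^ n) := by
  have hqc : Tendsto (fun n : ℕ => ((q : ℂ)) ^ n) atTop (𝓝 0) :=
    tendsto_pow_atTop_nhds_zero_of_norm_lt_one (by rwa [Complex.norm_real, Real.norm_eq_abs])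
  have hrat : Tendsto (fun n : ℕ =>
      ‖(1 - a * (q : ℂ) ^ n) / (1 - (q : ℂ) ^ (n + 1)) * y‖) atTop
      (𝓝 (‖y‖)) := by
    have h1 : Tendsto (fun n : ℕ => (1 - a * (q : ℂ) ^ n) / (1 - (q : ℂ) ^ (n + 1)) * y)
        atTop (𝓝 y) := by
      have hnum : Tendsto (fun n : ℕ => 1 - a * (q : ℂ) ^ n) atTop (𝓝 1) := by
        simpa using tendsto_const_nhds.sub (hqc.const_mul a)
      have hden : Tendsto (fun n : ℕ => 1 - (q : ℂ) ^ (n + 1)) atTop (𝓝 1) := by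
        simpa using tendsto_const_nhds.sub (hqc.comp (tendsto_add_atTop_nat 1))
      simpa using (hnum.div hden one_ne_zero).mul_const y
    exact (continuous_norm.tendsto y).comp h1
  set r : ℝ := (‖y‖ + 1) / 2 with hr
  have hyr : ‖y‖ < r := by rw [hr]; linarith
  have hr1 : r < 1 := by rw [hr]; linarith
  apply summable_of_ratio_norm_eventually_le hr1
  filter_upwards [hrat.eventually (gt_mem_nhds hyr)] with n hn
  have hstep : qbC a q (n + 1) * y ^ (n + 1) =
      (qbC a q n * y ^ n) * ((1 - a * (q : ℂ) ^ n) / (1 - (q : ℂ) ^ (n + 1)) * y) := by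
    rw [qbC_rec a hq n]; ring
  rw [hstep, norm_mul, mul_comm]
  exact mul_le_mul_of_nonneg_right hn.le (norm_nonneg _)

end coeff

section funceq

variable (a : ℂ) {q : ℝ}

lemma qbC_rec' (hq : |q| < 1) (n : ℕ) :
    qbC a q (n + 1) * (1 - (q : ℂ) ^ (n + 1)) = qbC a q n * (1 - a * (q : ℂ) ^ n) := by
  have h3 : (1 : ℂ) - (q : ℂ) ^ (n + 1) ≠ 0 := by
    simpa [pow_succ'] using fac_ne (q : ℂ) hq (by rwa [Complex.norm_real, Real.norm_eq_abs]) n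
  rw [qbC_rec a hq n]
  field_simp

lemma expand_aux (hq : |q| < 1) {y : ℂ} (hy : ‖y‖ < 1) (b : ℂ) :
    (1 - b * y) * (∑' n, qbC a q n * y ^ n) =
      1 + ∑' n : ℕ, (qbC a q (n + 1) - b * qbC a q n) * y ^ (n + 1) := by
  have hS := summable_qbC a hq hy
  have hS1 : Summable (fun n : ℕ => qbC a q (n + 1) * y ^ (n + 1)) := by
    exact_mod_cast (summable_nat_add_iff 1).2 hS
  have hS2 : Summable (fun n : ℕ => b * qbC a q n * y ^ (n + 1)) := by
    apply (hS.mul_left (b * y)).congr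
    intro n; ring
  rw [sub_mul, one_mul, ← tsum_mul_left, Summable.tsum_eq_zero_add hS, qbC_zero, pow_zero, one_mul]
  have h2 : ∑' n : ℕ, b * y * (qbC a q n * y ^ n) = ∑' n : ℕ, b * qbC a q n * y ^ (n + 1) :=
    tsum_congr fun n => by ring
  rw [h2, add_sub_assoc, ← Summable.tsum_sub hS1 hS2]
  congr 1
  exact tsum_congr fun n => by ring

lemma expand_aux2 (hq : |q| < 1) {y : ℂ} (hy : ‖y‖ < 1)
    (hqy : ‖(q : ℂ) * y‖ < 1) :
    (1 - a * y) * (∑' n, qbC a q n * ((q : ℂ) * y) ^ n) =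
      1 + ∑' n : ℕ, (qbC a q (n + 1) * (q : ℂ) ^ (n + 1) - a * qbC a q n * (q : ℂ) ^ n) *
        y ^ (n + 1) := by
  have hG := summable_qbC a (q := q) hq hqy
  have hS1 : Summable (fun n : ℕ => qbC a q (n + 1) * ((q : ℂ) * y) ^ (n + 1)) := by
    exact_mod_cast (summable_nat_add_iff 1).2 hG
  have hS2 : Summable (fun n : ℕ => a * y * (qbC a q n * ((q : ℂ) * y) ^ n)) :=
    hG.mul_left (a * y)
  rw [sub_mul, one_mul, ← tsum_mul_left, Summable.tsum_eq_zero_add hG, qbC_zero, pow_zero, one_mul,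
    add_sub_assoc, ← Summable.tsum_sub hS1 hS2]
  congr 1
  exact tsum_congr fun n => by rw [mul_pow, mul_pow]; ring

lemma func_eq (hq : |q| < 1) {y : ℂ} (hy : ‖y‖ < 1) :
    (1 - y) * (∑' n, qbC a q n * y ^ n) =
      (1 - a * y) * (∑' n, qbC a q n * ((q : ℂ) * y) ^ n) := by
  have hqy : ‖(q : ℂ) * y‖ < 1 := by
    rw [norm_mul, Complex.norm_real, Real.norm_eq_abs]
    calc |q| * ‖y‖ ≤ 1 * ‖y‖ :=
          mul_le_mul_of_nonneg_right hq.le (norm_nonneg y)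
      _ < 1 := by simpa using hy
  have e1 := expand_aux a hq hy 1
  have e2 := expand_aux2 a hq hy hqy
  simp only [one_mul] at e1
  rw [e1, e2]
  congr 1
  apply tsum_congr
  intro n
  have hrec := qbC_rec' a hq n
  linear_combination (y ^ (n + 1) : ℂ) * hrec

lemma abs_qnx (hq : |q| < 1) {x : ℂ} (hx : ‖x‖ < 1) (n : ℕ) :
    ‖(q : ℂ) ^ n * x‖ < 1 := by
  rw [norm_mul, norm_pow, Complex.norm_real, Real.norm_eq_abs]
  calc |q| ^ n * ‖x‖ ≤ 1 * ‖x‖ :=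
        mul_le_mul_of_nonneg_right (pow_le_one₀ (abs_nonneg q) hq.le) (norm_nonneg x)
    _ < 1 := by simpa using hx

lemma iter_eq (hq : |q| < 1) {x : ℂ} (hx : ‖x‖ < 1) (n : ℕ) :
    (∏ i ∈ Finset.range n, (1 - x * (q : ℂ) ^ i)) * (∑' k, qbC a q k * x ^ k) =
      (∏ i ∈ Finset.range n, (1 - a * x * (q : ℂ) ^ i)) *
        (∑' k, qbC a q k * ((q : ℂ) ^ n * x) ^ k) := by
  induction n with
  | zero => simp
  | succ n ih =>
    have hfe := func_eq a hq (abs_qnx hq hx n)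
    have hql : (q : ℂ) * ((q : ℂ) ^ n * x) = (q : ℂ) ^ (n + 1) * x := by
      rw [pow_succ]; ring
    rw [hql] at hfe
    rw [Finset.prod_range_succ, Finset.prod_range_succ]
    linear_combination (1 - x * (q : ℂ) ^ n) * ih +
      (∏ i ∈ Finset.range n, (1 - a * x * (q : ℂ) ^ i)) * hfe

lemma S_tendsto_one (hq : |q| < 1) {x : ℂ} (hx : ‖x‖ < 1) :
    Tendsto (fun n : ℕ => ∑' k, qbC a q k * ((q : ℂ) ^ n * x) ^ k) atTop (𝓝 1) := by
  have hT : Summable (fun k : ℕ => ‖qbC a q (k + 1) * x ^ (k + 1)‖) := by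
    apply summable_norm_iff.2
    exact_mod_cast (summable_nat_add_iff 1).2 (summable_qbC a hq hx)
  set T : ℝ := ∑' k : ℕ, ‖qbC a q (k + 1) * x ^ (k + 1)‖ with hTdef
  have key : ∀ n : ℕ, ‖(∑' k, qbC a q k * ((q : ℂ) ^ n * x) ^ k) - 1‖ ≤ T * |q| ^ n := by
    intro n
    have hsum := summable_qbC a hq (abs_qnx hq hx n)
    have hshift : Summable (fun k : ℕ => qbC a q (k + 1) * ((q : ℂ) ^ n * x) ^ (k + 1)) := by
      exact_mod_cast (summable_nat_add_iff 1).2 hsum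
    have hdecomp : (∑' k, qbC a q k * ((q : ℂ) ^ n * x) ^ k) - 1 =
        ∑' k : ℕ, qbC a q (k + 1) * ((q : ℂ) ^ n * x) ^ (k + 1) := by
      rw [Summable.tsum_eq_zero_add hsum, qbC_zero, pow_zero, one_mul]
      ring
    have hb : ∀ k : ℕ, ‖qbC a q (k + 1) * ((q : ℂ) ^ n * x) ^ (k + 1)‖ ≤
        ‖qbC a q (k + 1) * x ^ (k + 1)‖ * |q| ^ n := by
      intro k
      have he : ‖qbC a q (k + 1) * ((q : ℂ) ^ n * x) ^ (k + 1)‖ =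
          ‖qbC a q (k + 1) * x ^ (k + 1)‖ * (|q| ^ n) ^ (k + 1) := by
        rw [mul_pow, norm_mul, norm_mul, norm_mul, norm_pow, norm_pow, norm_pow,
          Complex.norm_real, Real.norm_eq_abs]
        ring
      rw [he]
      apply mul_le_mul_of_nonneg_left _ (norm_nonneg _)
      exact pow_le_of_le_one (pow_nonneg (abs_nonneg q) n)
        (pow_le_one₀ (abs_nonneg q) hq.le) (Nat.succ_ne_zero k)
    rw [hdecomp]
    calc ‖∑' k : ℕ, qbC a q (k + 1) * ((q : ℂ) ^ n * x) ^ (k + 1)‖ ≤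
          ∑' k : ℕ, ‖qbC a q (k + 1) * ((q : ℂ) ^ n * x) ^ (k + 1)‖ :=
        norm_tsum_le_tsum_norm (summable_norm_iff.2 hshift)
      _ ≤ ∑' k : ℕ, ‖qbC a q (k + 1) * x ^ (k + 1)‖ * |q| ^ n :=
        Summable.tsum_le_tsum hb (summable_norm_iff.2 hshift) (hT.mul_right _)
      _ = T * |q| ^ n := tsum_mul_right
  have hg : Tendsto (fun n : ℕ => T * |q| ^ n) atTop (𝓝 0) := by
    simpa using (tendsto_pow_atTop_nhds_zero_of_lt_one (abs_nonneg q) hq).const_mul T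
  have h0 : Tendsto (fun n : ℕ => (∑' k, qbC a q k * ((q : ℂ) ^ n * x) ^ k) - 1)
      atTop (𝓝 0) := squeeze_zero_norm key hg
  simpa using h0.add_const 1

end funceq

theorem stmt_7 (q : ℝ) (hq : |q| < 1) (a x : ℂ) (hx : ‖x‖ < 1) :
    ∑' n : ℕ, qPoch a q n / qPoch (q : ℂ) q n * x ^ n =
      qPochInf (a * x) q / qPochInf x q := by
  have hgoal : (∑' n : ℕ, qPoch a q n / qPoch (q : ℂ) q n * x ^ n) =
      ∑' n : ℕ, qbC a q n * x ^ n := rfl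
  rw [hgoal]
  set S : ℂ := ∑' n : ℕ, qbC a q n * x ^ n with hS
  have hL : Tendsto (fun n : ℕ => (∏ i ∈ Finset.range n, (1 - x * (q : ℂ) ^ i)) * S)
      atTop (𝓝 (qPochInf x q * S)) := (hasProd_poch x hq).tendsto_prod_nat.mul_const S
  have hR : Tendsto (fun n : ℕ => (∏ i ∈ Finset.range n, (1 - a * x * (q : ℂ) ^ i)) *
      (∑' k, qbC a q k * ((q : ℂ) ^ n * x) ^ k)) atTop (𝓝 (qPochInf (a * x) q * 1)) :=
    (hasProd_poch (a * x) hq).tendsto_prod_nat.mul (S_tendsto_one a hq hx)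
  have hkey : qPochInf x q * S = qPochInf (a * x) q * 1 :=
    tendsto_nhds_unique ((hL.congr (fun n => iter_eq a hq hx n))) hR
  have h0 : qPochInf x q ≠ 0 := pochInf_ne x hq (fac_ne x hq hx)
  rw [eq_div_iff h0]
  linear_combination hkey
end

section
/- Let $p \geq 2$ be an integer, $q = 1/p$, and let $r_1, r_2$ be positive integers. Then for each $n \geq 1$ the integral $R_n^- = \sum_{\ell=0}^\infty q^{r_2 \ell} Q_n(q^{r_2 \ell}) (p^{r_2 n} - q^{r_2\ell})^{-1} q^{r_1 \ell} q^{-r_2 \ell}$ (the orthogonality error term with the little $q$-Jacobi polynomial $Q_n(z) = p_n(z; q^{r_1} p^{r_2}, 1 \mid q^{r_2})$) is nonzero. -/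
/-- The real $q$-Pochhammer symbol $(a;q)_k = \prod_{i=0}^{k-1}(1-aq^i)$. -/
def qPochR (a q : ℝ) (k : ℕ) : ℝ := ∏ i ∈ Finset.range k, (1 - a * q ^ i)

/-- The little $q$-Jacobi polynomial
$Q_n(z)=\sum_{k=0}^n \frac{(q_2^{-n};q_2)_k (q_1 q_2^n;q_2)_k}{(q_1;q_2)_k (q_2;q_2)_k} q_2^k z^k$. -/
noncomputable def littleQJacobi (q₁ q₂ : ℝ) (n : ℕ) (z : ℝ) : ℝ :=
  ∑ k ∈ Finset.range (n + 1),
    qPochR ((q₂ ^ n)⁻¹) q₂ k * qPochR (q₁ * q₂ ^ n) q₂ k /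
      (qPochR q₁ q₂ k * qPochR q₂ q₂ k) * q₂ ^ k * z ^ k

open Finset
section
variable {a q : ℝ}

noncomputable def cc (a q : ℝ) (n k : ℕ) : ℝ :=
  qPochR ((q ^ n)⁻¹) q k * qPochR (a * q ^ n) q k / (qPochR a q k * qPochR q q k) * q ^ k

noncomputable def VV (a q : ℝ) (n : ℕ) : ℝ :=
  qPochR ((q ^ n)⁻¹) q n * a ^ n * q ^ (n * n) / qPochR a q n

lemma qPochR_zero (a q : ℝ) : qPochR a q 0 = 1 := Finset.prod_range_zero _

lemma qPochR_succ (a q : ℝ) (k : ℕ) :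
    qPochR a q (k + 1) = qPochR a q k * (1 - a * q ^ k) := Finset.prod_range_succ _ _

lemma qPochR_pos {b q : ℝ} (hb0 : 0 ≤ b) (hb1 : b < 1) (hq0 : 0 ≤ q) (hq1 : q ≤ 1) (k : ℕ) :
    0 < qPochR b q k := by
  apply Finset.prod_pos
  intro i _
  have h1 : b * q ^ i ≤ b * 1 := by
    apply mul_le_mul_of_nonneg_left _ hb0
    exact pow_le_one₀ hq0 hq1
  nlinarith

lemma prod_flip {w q : ℝ} (hw : w ≠ 0) (hq : q ≠ 0) (k : ℕ) :
    ∏ t ∈ range k, (1 - w * q ^ t) =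
      (-1) ^ k * w ^ k * (∏ t ∈ range k, q ^ t) *
        ∏ t ∈ range k, (1 - w⁻¹ * (q ^ t)⁻¹) := by
  induction k with
  | zero => simp
  | succ k ih =>
    rw [prod_range_succ, ih, prod_range_succ, prod_range_succ]
    have hqk : (q : ℝ) ^ k ≠ 0 := pow_ne_zero _ hq
    field_simp
    ring

lemma E_id (ha0 : 0 < a) (ha1 : a < 1) (hq0 : 0 < q) (hq1 : q < 1) (n : ℕ) :
    ∀ i, i ≤ n →
    cc a q n i * ((∏ s ∈ range i, (1 - (q ^ (s + 1))⁻¹)) * ∏ s ∈ range (n - i), (1 - q ^ (s + 1)))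
      = VV a q n * ∏ j ∈ range n, (1 - (q ^ j)⁻¹ * (a⁻¹ * (q ^ i)⁻¹)) := by
  have hane : a ≠ 0 := ne_of_gt ha0
  have hqne : q ≠ 0 := ne_of_gt hq0
  intro i
  induction i with
  | zero =>
    intro _
    have hcc0 : cc a q n 0 = 1 := by simp [cc, qPochR]
    rw [hcc0]
    simp only [prod_range_zero, one_mul, pow_zero, inv_one, mul_one, Nat.sub_zero]
    -- rewrite RHS product into flip form
    have hr : ∏ j ∈ range n, (1 - (q ^ j)⁻¹ * a⁻¹) = ∏ j ∈ range n, (1 - a⁻¹ * (q⁻¹) ^ j) := by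
      apply Finset.prod_congr rfl
      intro j _
      rw [inv_pow]
      ring
    have hflip1 : ∏ j ∈ range n, (1 - a⁻¹ * (q⁻¹) ^ j) =
        (-1) ^ n * (a⁻¹) ^ n * (∏ t ∈ range n, (q⁻¹) ^ t) * qPochR a q n := by
      rw [prod_flip (inv_ne_zero hane) (inv_ne_zero hqne) n]
      congr 1
      apply Finset.prod_congr rfl
      intro t _
      rw [inv_inv, inv_pow, inv_inv]
    have hflip2 : qPochR ((q ^ n)⁻¹) q n =
        (-1) ^ n * ((q ^ n)⁻¹) ^ n * (∏ t ∈ range n, q ^ t) *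
          ∏ s ∈ range n, (1 - q ^ (s + 1)) := by
      show ∏ t ∈ range n, (1 - (q ^ n)⁻¹ * q ^ t) = _
      rw [prod_flip (inv_ne_zero (pow_ne_zero _ hqne)) hqne n]
      congr 1
      rw [← Finset.prod_range_reflect (fun s => (1 - q ^ (s + 1))) n]
      apply Finset.prod_congr rfl
      intro t ht
      rw [Finset.mem_range] at ht
      have h1 : (q : ℝ) ^ n = q ^ t * q ^ (n - 1 - t + 1) := by
        rw [← pow_add]; congr 1; omega
      rw [inv_inv, h1, mul_comm (q ^ t), mul_assoc, mul_inv_cancel₀ (pow_ne_zero t hqne), mul_one]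
    rw [hr, hflip1, VV, hflip2]
    have hG : (∏ t ∈ range n, (q : ℝ) ^ t) * (∏ t ∈ range n, (q⁻¹ : ℝ) ^ t) = 1 := by
      rw [← Finset.prod_mul_distrib]
      apply Finset.prod_eq_one
      intro t _
      rw [← mul_pow, mul_inv_cancel₀ hqne, one_pow]
    have hqn : (((q : ℝ) ^ n)⁻¹) ^ n * q ^ (n * n) = 1 := by
      rw [inv_pow, ← pow_mul]
      exact inv_mul_cancel₀ (pow_ne_zero _ hqne)
    have han : ((a : ℝ)⁻¹) ^ n * a ^ n = 1 := by
      rw [inv_pow]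
      exact inv_mul_cancel₀ (pow_ne_zero _ hane)
    have hneg : ((-1 : ℝ)) ^ n * (-1) ^ n = 1 := by
      rw [← mul_pow]; norm_num
    have hPA : qPochR a q n ≠ 0 := ne_of_gt (qPochR_pos ha0.le ha1 hq0.le hq1.le n)
    symm
    calc (-1:ℝ) ^ n * ((q ^ n)⁻¹) ^ n * (∏ t ∈ range n, q ^ t) *
          (∏ s ∈ range n, (1 - q ^ (s + 1))) * a ^ n * q ^ (n * n) / qPochR a q n *
          ((-1) ^ n * (a⁻¹) ^ n * (∏ t ∈ range n, (q⁻¹) ^ t) * qPochR a q n)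
        = ((-1) ^ n * (-1) ^ n) * (((q ^ n)⁻¹) ^ n * q ^ (n * n)) * ((a⁻¹) ^ n * a ^ n) *
            ((∏ t ∈ range n, q ^ t) * (∏ t ∈ range n, (q⁻¹) ^ t)) *
            ((qPochR a q n)⁻¹ * qPochR a q n) * (∏ s ∈ range n, (1 - q ^ (s + 1))) := by
          rw [div_eq_mul_inv]; ring
      _ = ∏ s ∈ range n, (1 - q ^ (s + 1)) := by
          rw [hneg, hqn, han, hG, inv_mul_cancel₀ hPA]; ring
  | succ i IH =>
    intro hi1
    have hin : i ≤ n := by omega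
    have hiltn : i < n := by omega
    have hIH := IH hin
    have hqi1 : q ^ i ≤ 1 := pow_le_one₀ hq0.le hq1.le
    have hQi : (q : ℝ) ^ i ≠ 0 := pow_ne_zero _ hqne
    have hQn : (q : ℝ) ^ n ≠ 0 := pow_ne_zero _ hqne
    have hu1 : (0:ℝ) < 1 - a * q ^ i := by nlinarith
    have hu2 : (0:ℝ) < 1 - q * q ^ i := by nlinarith
    have hu3 : (0:ℝ) < 1 - q ^ (n - i) := by
      have : q ^ (n - i) < 1 := pow_lt_one₀ hq0.le hq1 (by omega)
      linarith
    have hg0 : (1 - ((q:ℝ) ^ 0)⁻¹ * (a⁻¹ * (q ^ i)⁻¹)) ≠ 0 := by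
      have h1 : (1:ℝ) < (a * q ^ i)⁻¹ := by
        apply (one_lt_inv₀ (by positivity)).2
        nlinarith
      rw [mul_inv] at h1
      simp only [pow_zero, inv_one, one_mul]
      linarith
    -- cc recurrence
    have hPA : qPochR a q i ≠ 0 := ne_of_gt (qPochR_pos ha0.le ha1 hq0.le hq1.le i)
    have hPQ : qPochR q q i ≠ 0 := ne_of_gt (qPochR_pos hq0.le hq1 hq0.le hq1.le i)
    have hcc : cc a q n (i + 1) * ((1 - a * q ^ i) * (1 - q * q ^ i)) =
        cc a q n i * ((1 - (q ^ n)⁻¹ * q ^ i) * (1 - a * q ^ n * q ^ i) * q) := by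
      simp only [cc, qPochR_succ, pow_succ]
      have hu1' := hu1.ne'
      have hu2' := hu2.ne'
      generalize (1 - a * q ^ i) = u at *
      generalize (1 - q * q ^ i) = v at *
      field_simp
    -- product over range (n - i)
    have hP : ∏ s ∈ range (n - i), (1 - q ^ (s + 1)) =
        (∏ s ∈ range (n - (i + 1)), (1 - q ^ (s + 1))) * (1 - q ^ (n - i)) := by
      have h4 : n - i = n - (i + 1) + 1 := by omega
      rw [h4, Finset.prod_range_succ]
    rw [hP] at hIH
    -- W recurrence
    have e0 : ∀ j : ℕ, ((q:ℝ) ^ j)⁻¹ * ((q:ℝ) ^ (i + 1))⁻¹ = (q ^ (j + 1))⁻¹ * (q ^ i)⁻¹ := by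
      intro j
      rw [← mul_inv, ← mul_inv, ← pow_add, ← pow_add]
      have : j + (i + 1) = j + 1 + i := by omega
      rw [this]
    have e1 : ∀ j : ℕ, (1 - ((q:ℝ) ^ j)⁻¹ * (a⁻¹ * ((q:ℝ) ^ (i + 1))⁻¹)) =
        (1 - ((q:ℝ) ^ (j + 1))⁻¹ * (a⁻¹ * (q ^ i)⁻¹)) := by
      intro j
      linear_combination (-(a⁻¹)) * e0 j
    have hW : (∏ j ∈ range n, (1 - ((q:ℝ) ^ j)⁻¹ * (a⁻¹ * (q ^ (i + 1))⁻¹))) *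
          (1 - ((q:ℝ) ^ 0)⁻¹ * (a⁻¹ * (q ^ i)⁻¹)) =
        (∏ j ∈ range n, (1 - ((q:ℝ) ^ j)⁻¹ * (a⁻¹ * (q ^ i)⁻¹))) *
          (1 - ((q:ℝ) ^ n)⁻¹ * (a⁻¹ * (q ^ i)⁻¹)) := by
      have h5 : ∏ j ∈ range n, (1 - ((q:ℝ) ^ j)⁻¹ * (a⁻¹ * (q ^ (i + 1))⁻¹)) =
          ∏ j ∈ range n, (1 - ((q:ℝ) ^ (j + 1))⁻¹ * (a⁻¹ * (q ^ i)⁻¹)) :=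
        Finset.prod_congr rfl fun j _ => e1 j
      rw [h5, ← Finset.prod_range_succ' (fun j => (1 - ((q:ℝ) ^ j)⁻¹ * (a⁻¹ * (q ^ i)⁻¹))) n,
        Finset.prod_range_succ]
    -- scalar identity
    have hni : (q : ℝ) ^ (n - i) = q ^ n * (q ^ i)⁻¹ := by
      have h6 : (q : ℝ) ^ (n - i) * q ^ i = q ^ n := by
        rw [← pow_add]; congr 1; omega
      field_simp [← h6]
      exact h6
    have scal : (1 - ((q:ℝ) ^ n)⁻¹ * q ^ i) * (1 - a * q ^ n * q ^ i) * q * (1 - (q ^ (i + 1))⁻¹) *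
          (1 - ((q:ℝ) ^ 0)⁻¹ * (a⁻¹ * (q ^ i)⁻¹)) =
        (1 - ((q:ℝ) ^ n)⁻¹ * (a⁻¹ * (q ^ i)⁻¹)) *
          ((1 - a * q ^ i) * (1 - q * q ^ i) * (1 - q ^ (n - i))) := by
      rw [pow_succ, hni, pow_zero]
      field_simp
      ring
    -- assemble
    have hM : ((1 - a * q ^ i) * (1 - q * q ^ i) * (1 - q ^ (n - i)) *
        (1 - ((q:ℝ) ^ 0)⁻¹ * (a⁻¹ * (q ^ i)⁻¹))) ≠ 0 := by
      apply mul_ne_zero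
      apply mul_ne_zero
      apply mul_ne_zero
      · exact ne_of_gt hu1
      · exact ne_of_gt hu2
      · exact ne_of_gt hu3
      · exact hg0
    apply mul_right_cancel₀ hM
    rw [Finset.prod_range_succ]
    calc cc a q n (i + 1) *
          ((∏ s ∈ range i, (1 - (q ^ (s + 1))⁻¹)) * (1 - (q ^ (i + 1))⁻¹) *
            ∏ s ∈ range (n - (i + 1)), (1 - q ^ (s + 1))) *
          ((1 - a * q ^ i) * (1 - q * q ^ i) * (1 - q ^ (n - i)) *
            (1 - ((q:ℝ) ^ 0)⁻¹ * (a⁻¹ * (q ^ i)⁻¹)))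
        = (cc a q n (i + 1) * ((1 - a * q ^ i) * (1 - q * q ^ i))) *
            ((∏ s ∈ range i, (1 - (q ^ (s + 1))⁻¹)) * (1 - (q ^ (i + 1))⁻¹) *
              (∏ s ∈ range (n - (i + 1)), (1 - q ^ (s + 1))) * (1 - q ^ (n - i)) *
              (1 - ((q:ℝ) ^ 0)⁻¹ * (a⁻¹ * (q ^ i)⁻¹))) := by ring
      _ = (cc a q n i * ((1 - (q ^ n)⁻¹ * q ^ i) * (1 - a * q ^ n * q ^ i) * q)) *
            ((∏ s ∈ range i, (1 - (q ^ (s + 1))⁻¹)) * (1 - (q ^ (i + 1))⁻¹) *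
              (∏ s ∈ range (n - (i + 1)), (1 - q ^ (s + 1))) * (1 - q ^ (n - i)) *
              (1 - ((q:ℝ) ^ 0)⁻¹ * (a⁻¹ * (q ^ i)⁻¹))) := by rw [hcc]
      _ = (cc a q n i *
            ((∏ s ∈ range i, (1 - (q ^ (s + 1))⁻¹)) *
              ((∏ s ∈ range (n - (i + 1)), (1 - q ^ (s + 1))) * (1 - q ^ (n - i))))) *
            ((1 - (q ^ n)⁻¹ * q ^ i) * (1 - a * q ^ n * q ^ i) * q * (1 - (q ^ (i + 1))⁻¹) *
              (1 - ((q:ℝ) ^ 0)⁻¹ * (a⁻¹ * (q ^ i)⁻¹))) := by ring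
      _ = (VV a q n * ∏ j ∈ range n, (1 - (q ^ j)⁻¹ * (a⁻¹ * (q ^ i)⁻¹))) *
            ((1 - (q ^ n)⁻¹ * q ^ i) * (1 - a * q ^ n * q ^ i) * q * (1 - (q ^ (i + 1))⁻¹) *
              (1 - ((q:ℝ) ^ 0)⁻¹ * (a⁻¹ * (q ^ i)⁻¹))) := by rw [hIH]
      _ = (VV a q n * ∏ j ∈ range n, (1 - (q ^ j)⁻¹ * (a⁻¹ * (q ^ i)⁻¹))) *
            ((1 - ((q:ℝ) ^ n)⁻¹ * (a⁻¹ * (q ^ i)⁻¹)) *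
              ((1 - a * q ^ i) * (1 - q * q ^ i) * (1 - q ^ (n - i)))) := by rw [scal]
      _ = VV a q n *
            ((∏ j ∈ range n, (1 - (q ^ j)⁻¹ * (a⁻¹ * (q ^ i)⁻¹))) *
              (1 - ((q:ℝ) ^ n)⁻¹ * (a⁻¹ * (q ^ i)⁻¹))) *
            ((1 - a * q ^ i) * (1 - q * q ^ i) * (1 - q ^ (n - i))) := by ring
      _ = VV a q n *
            ((∏ j ∈ range n, (1 - ((q:ℝ) ^ j)⁻¹ * (a⁻¹ * (q ^ (i + 1))⁻¹))) *
              (1 - ((q:ℝ) ^ 0)⁻¹ * (a⁻¹ * (q ^ i)⁻¹))) *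
            ((1 - a * q ^ i) * (1 - q * q ^ i) * (1 - q ^ (n - i))) := by rw [hW]
      _ = VV a q n * (∏ j ∈ range n, (1 - ((q:ℝ) ^ j)⁻¹ * (a⁻¹ * (q ^ (i + 1))⁻¹))) *
            ((1 - a * q ^ i) * (1 - q * q ^ i) * (1 - q ^ (n - i)) *
              (1 - ((q:ℝ) ^ 0)⁻¹ * (a⁻¹ * (q ^ i)⁻¹))) := by ring
end

lemma prod_erase_eval {q : ℝ} (hq : q ≠ 0) {i n : ℕ} (hin : i ≤ n) :
    ∏ j ∈ (range (n + 1)).erase i, (1 - q ^ j * (q ^ i)⁻¹)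
      = (∏ s ∈ range i, (1 - (q ^ (s + 1))⁻¹)) * ∏ s ∈ range (n - i), (1 - q ^ (s + 1)) := by
  have hset : (range (n + 1)).erase i = range i ∪ Finset.Ico (i + 1) (n + 1) := by
    ext j
    simp only [Finset.mem_erase, Finset.mem_range, Finset.mem_union, Finset.mem_Ico]
    omega
  have hdisj : Disjoint (range i) (Finset.Ico (i + 1) (n + 1)) := by
    rw [Finset.disjoint_left]
    intro x hx hx'
    simp only [Finset.mem_range] at hx
    simp only [Finset.mem_Ico] at hx'
    omega
  rw [hset, Finset.prod_union hdisj]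
  congr 1
  · rw [← Finset.prod_range_reflect (fun s => (1 - (q ^ (s + 1))⁻¹)) i]
    apply Finset.prod_congr rfl
    intro j hj
    rw [Finset.mem_range] at hj
    have h1 : q ^ i = q ^ j * q ^ (i - 1 - j + 1) := by
      rw [← pow_add]; congr 1; omega
    rw [h1, mul_inv, ← mul_assoc, mul_inv_cancel₀ (pow_ne_zero j hq), one_mul]
  · rw [Finset.prod_Ico_eq_prod_range]
    have h2 : n + 1 - (i + 1) = n - i := by omega
    rw [h2]
    apply Finset.prod_congr rfl
    intro s _
    have h3 : q ^ (i + 1 + s) = q ^ i * q ^ (s + 1) := by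
      rw [← pow_add]; congr 1; omega
    rw [h3, mul_comm (q ^ i), mul_assoc, mul_inv_cancel₀ (pow_ne_zero i hq), mul_one]

section Key
variable {a q : ℝ}
open Polynomial in
lemma key_poly (ha0 : 0 < a) (ha1 : a < 1) (hq0 : 0 < q) (hq1 : q < 1) (n : ℕ) (x : ℝ) :
    ∑ k ∈ range (n + 1), cc a q n k * ∏ j ∈ (range (n + 1)).erase k, (1 - a * q ^ j * x)
      = VV a q n * ∏ j ∈ range n, (1 - (q ^ j)⁻¹ * x) := by
  have hane : a ≠ 0 := ne_of_gt ha0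
  have hqne : q ≠ 0 := ne_of_gt hq0
  set L : Polynomial ℝ := ∑ k ∈ range (n + 1), Polynomial.C (cc a q n k) *
      ∏ j ∈ (range (n + 1)).erase k, (Polynomial.C (-(a * q ^ j)) * Polynomial.X + Polynomial.C 1)
    with hL
  set R : Polynomial ℝ := Polynomial.C (VV a q n) *
      ∏ j ∈ range n, (Polynomial.C (-((q ^ j)⁻¹)) * Polynomial.X + Polynomial.C 1) with hR
  -- degree bounds
  have hdegprod : ∀ (s : Finset ℕ) (c : ℕ → ℝ),
      (∏ j ∈ s, (Polynomial.C (c j) * Polynomial.X + Polynomial.C 1)).degree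
        ≤ ((s.card : ℕ) : WithBot ℕ) := by
    intro s c
    refine le_trans (Polynomial.degree_prod_le _ _) ?_
    refine le_trans (Finset.sum_le_sum fun j _ => Polynomial.degree_linear_le (a := c j) (b := 1)) ?_
    rw [Finset.sum_const, nsmul_eq_mul, mul_one]
  have hdegL : L.degree < ((n + 1 : ℕ) : WithBot ℕ) := by
    refine lt_of_le_of_lt (Polynomial.degree_sum_le _ _) ?_
    rw [Finset.sup_lt_iff (by exact_mod_cast WithBot.bot_lt_coe (n + 1))]
    intro k hk
    refine lt_of_le_of_lt (Polynomial.degree_mul_le _ _) ?_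
    have h1 := hdegprod ((range (n + 1)).erase k) (fun j => -(a * q ^ j))
    have hcard : ((range (n + 1)).erase k).card = n := by
      rw [Finset.card_erase_of_mem (by simpa using Finset.mem_range.2 (Finset.mem_range.1 hk))]
      simp
    rw [hcard] at h1
    calc (Polynomial.C (cc a q n k)).degree +
          (∏ j ∈ (range (n + 1)).erase k,
            (Polynomial.C (-(a * q ^ j)) * Polynomial.X + Polynomial.C 1)).degree
        ≤ 0 + (n : WithBot ℕ) := add_le_add Polynomial.degree_C_le h1
      _ < ((n + 1 : ℕ) : WithBot ℕ) := by
          rw [zero_add]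
          exact_mod_cast WithBot.coe_lt_coe.2 (Nat.lt_succ_self n)
  have hdegR : R.degree < ((n + 1 : ℕ) : WithBot ℕ) := by
    refine lt_of_le_of_lt (Polynomial.degree_mul_le _ _) ?_
    have h1 := hdegprod (range n) (fun j => -((q ^ j)⁻¹))
    rw [Finset.card_range] at h1
    calc (Polynomial.C (VV a q n)).degree +
          (∏ j ∈ range n, (Polynomial.C (-((q ^ j)⁻¹)) * Polynomial.X + Polynomial.C 1)).degree
        ≤ 0 + (n : WithBot ℕ) := add_le_add Polynomial.degree_C_le h1
      _ < ((n + 1 : ℕ) : WithBot ℕ) := by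
          rw [zero_add]
          exact_mod_cast WithBot.coe_lt_coe.2 (Nat.lt_succ_self n)
  -- node set
  have hmono : StrictMono fun i : ℕ => a⁻¹ * ((q : ℝ) ^ i)⁻¹ := by
    intro i j hij
    dsimp only
    apply mul_lt_mul_of_pos_left _ (inv_pos.2 ha0)
    rw [inv_lt_inv₀ (by positivity) (by positivity)]
    exact pow_lt_pow_right_of_lt_one₀ hq0 hq1 hij
  set s : Finset ℝ := (range (n + 1)).image (fun i => a⁻¹ * ((q : ℝ) ^ i)⁻¹) with hs
  have hcards : s.card = n + 1 := by
    rw [hs, Finset.card_image_of_injective _ hmono.injective, Finset.card_range]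
  -- evaluations agree on s
  have heval : ∀ y ∈ s, L.eval y = R.eval y := by
    intro y hy
    rw [hs, Finset.mem_image] at hy
    obtain ⟨i, hi, rfl⟩ := hy
    rw [Finset.mem_range] at hi
    have hin : i ≤ n := by omega
    have evalL : L.eval (a⁻¹ * ((q : ℝ) ^ i)⁻¹) =
        ∑ k ∈ range (n + 1), cc a q n k *
          ∏ j ∈ (range (n + 1)).erase k, (-(a * q ^ j) * (a⁻¹ * ((q : ℝ) ^ i)⁻¹) + 1) := by
      simp [hL, Polynomial.eval_finset_sum, Polynomial.eval_prod]
    have evalR : R.eval (a⁻¹ * ((q : ℝ) ^ i)⁻¹) =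
        VV a q n * ∏ j ∈ range n, (-((q ^ j)⁻¹) * (a⁻¹ * ((q : ℝ) ^ i)⁻¹) + 1) := by
      simp [hR, Polynomial.eval_prod]
    rw [evalL, evalR]
    have hcollapse : ∑ k ∈ range (n + 1), cc a q n k *
          ∏ j ∈ (range (n + 1)).erase k, (-(a * q ^ j) * (a⁻¹ * ((q : ℝ) ^ i)⁻¹) + 1)
        = cc a q n i *
          ∏ j ∈ (range (n + 1)).erase i, (-(a * q ^ j) * (a⁻¹ * ((q : ℝ) ^ i)⁻¹) + 1) := by
      apply Finset.sum_eq_single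
      · intro k hk hki
        have hmem : i ∈ (range (n + 1)).erase k :=
          Finset.mem_erase.2 ⟨fun h => hki (h ▸ rfl), Finset.mem_range.2 hi⟩
        have hzero : -(a * q ^ i) * (a⁻¹ * ((q : ℝ) ^ i)⁻¹) + 1 = 0 := by
          field_simp
          norm_num
        rw [Finset.prod_eq_zero hmem hzero, mul_zero]

      · intro h
        exact absurd (Finset.mem_range.2 hi) h
    rw [hcollapse]
    have hfac : ∀ j ∈ (range (n + 1)).erase i,
        (-(a * q ^ j) * (a⁻¹ * ((q : ℝ) ^ i)⁻¹) + 1) = (1 - q ^ j * ((q : ℝ) ^ i)⁻¹) := by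
      intro j _
      linear_combination (-((q:ℝ) ^ j * ((q:ℝ) ^ i)⁻¹)) * (mul_inv_cancel₀ hane)
    rw [Finset.prod_congr rfl hfac, prod_erase_eval hqne hin, E_id ha0 ha1 hq0 hq1 n i hin]
    congr 1
    apply Finset.prod_congr rfl
    intro j _
    ring
  have hLR : L = R := by
    apply Polynomial.eq_of_degrees_lt_of_eval_finset_eq s
    · rw [hcards]; exact_mod_cast hdegL
    · rw [hcards]; exact_mod_cast hdegR
    · exact heval
  -- evaluate at x
  have := congrArg (Polynomial.eval x) hLR
  rw [hL, hR] at this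
  simp only [Polynomial.eval_finset_sum, Polynomial.eval_mul, Polynomial.eval_prod,
    Polynomial.eval_add, Polynomial.eval_C, Polynomial.eval_X] at this
  calc ∑ k ∈ range (n + 1), cc a q n k * ∏ j ∈ (range (n + 1)).erase k, (1 - a * q ^ j * x)
      = ∑ k ∈ range (n + 1), cc a q n k *
          ∏ j ∈ (range (n + 1)).erase k, (-(a * q ^ j) * x + 1) := by
        apply Finset.sum_congr rfl
        intro k _
        congr 1
        apply Finset.prod_congr rfl
        intro j _
        ring
    _ = VV a q n * ∏ j ∈ range n, (-((q ^ j)⁻¹) * x + 1) := this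
    _ = VV a q n * ∏ j ∈ range n, (1 - (q ^ j)⁻¹ * x) := by
        congr 1
        apply Finset.prod_congr rfl
        intro j _
        ring
end Key

section Tm
variable {a q : ℝ}

lemma Tm_eq (ha0 : 0 < a) (ha1 : a < 1) (hq0 : 0 < q) (hq1 : q < 1) (n m : ℕ) :
    ∑ k ∈ range (n + 1), cc a q n k * (1 - a * q ^ (m + k))⁻¹
      = VV a q n * (∏ j ∈ range n, (1 - (q ^ j)⁻¹ * q ^ m)) *
          (∏ j ∈ range (n + 1), (1 - a * q ^ (m + j)))⁻¹ := by
  have hfacpos : ∀ j : ℕ, (0:ℝ) < 1 - a * q ^ (m + j) := by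
    intro j
    have h1 : q ^ (m + j) ≤ 1 := pow_le_one₀ hq0.le hq1.le
    nlinarith
  have hDpos : (0:ℝ) < ∏ j ∈ range (n + 1), (1 - a * q ^ (m + j)) :=
    Finset.prod_pos fun j _ => hfacpos j
  have hfac : ∀ j : ℕ, (1:ℝ) - a * q ^ j * q ^ m = 1 - a * q ^ (m + j) := by
    intro j
    rw [mul_assoc, ← pow_add, add_comm j m]
  have hterm : ∀ k ∈ range (n + 1), cc a q n k * (1 - a * q ^ (m + k))⁻¹
      = cc a q n k * (∏ j ∈ (range (n + 1)).erase k, (1 - a * q ^ j * q ^ m)) *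
          (∏ j ∈ range (n + 1), (1 - a * q ^ (m + j)))⁻¹ := by
    intro k hk
    have h1 : (1 - a * q ^ (m + k)) * ∏ j ∈ (range (n + 1)).erase k, (1 - a * q ^ (m + j)) =
        ∏ j ∈ range (n + 1), (1 - a * q ^ (m + j)) :=
      Finset.mul_prod_erase (range (n + 1)) (fun j => 1 - a * q ^ (m + j)) hk
    have h2 : ∏ j ∈ (range (n + 1)).erase k, (1 - a * q ^ j * q ^ m) =
        ∏ j ∈ (range (n + 1)).erase k, (1 - a * q ^ (m + j)) :=
      Finset.prod_congr rfl fun j _ => hfac j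
    have h3 : (0:ℝ) < ∏ j ∈ (range (n + 1)).erase k, (1 - a * q ^ (m + j)) :=
      Finset.prod_pos fun j _ => hfacpos j
    rw [h2, ← h1, mul_inv, mul_mul_mul_comm, mul_inv_cancel₀ (ne_of_gt h3), mul_one]
  rw [Finset.sum_congr rfl hterm, ← Finset.sum_mul, key_poly ha0 ha1 hq0 hq1 n (q ^ m)]

end Tm

section Main
variable {a q : ℝ}

lemma VV_ne (ha0 : 0 < a) (ha1 : a < 1) (hq0 : 0 < q) (hq1 : q < 1) (n : ℕ) :
    VV a q n ≠ 0 := by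
  have hqne : q ≠ 0 := ne_of_gt hq0
  unfold VV
  apply div_ne_zero
  · apply mul_ne_zero (mul_ne_zero _ (pow_ne_zero _ (ne_of_gt ha0))) (pow_ne_zero _ hqne)
    unfold qPochR
    rw [Finset.prod_ne_zero_iff]
    intro t ht
    rw [Finset.mem_range] at ht
    have h1 : q ^ n < q ^ t := pow_lt_pow_right_of_lt_one₀ hq0 hq1 ht
    have h2 : (1:ℝ) < q ^ t / q ^ n := (one_lt_div (pow_pos hq0 n)).2 h1
    rw [div_eq_mul_inv, mul_comm] at h2
    intro hcon
    rw [sub_eq_zero] at hcon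
    rw [← hcon] at h2
    exact lt_irrefl _ h2
  · exact ne_of_gt (qPochR_pos ha0.le ha1 hq0.le hq1.le n)

set_option maxHeartbeats 1000000 in
theorem stmt_9 (p : ℕ) (hp : 2 ≤ p) (r₁ r₂ : ℕ) (hr₁ : 1 ≤ r₁) (hr₂ : 1 ≤ r₂)
    (n : ℕ) (hn : 1 ≤ n) :
    (∑' ℓ : ℕ,
        littleQJacobi ((1 / p : ℝ) ^ r₁) ((1 / p : ℝ) ^ r₂) n (((1 / p : ℝ) ^ r₂) ^ ℓ) *
          ((1 / p : ℝ) ^ r₁) ^ ℓ / ((p : ℝ) ^ (r₂ * n) - ((1 / p : ℝ) ^ r₂) ^ ℓ)) ≠ 0 := by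
  have hp2 : (2:ℝ) ≤ (p:ℝ) := by exact_mod_cast hp
  have hp0 : (0:ℝ) < p := by linarith
  set a : ℝ := (1 / (p:ℝ)) ^ r₁ with ha_def
  set q : ℝ := (1 / (p:ℝ)) ^ r₂ with hq_def
  have hinv0 : (0:ℝ) < 1 / p := by positivity
  have hinv1 : (1:ℝ) / p < 1 := by rw [div_lt_one hp0]; linarith
  have ha0 : 0 < a := pow_pos hinv0 _
  have hq0 : 0 < q := pow_pos hinv0 _
  have ha1 : a < 1 := pow_lt_one₀ hinv0.le hinv1 (by omega)
  have hq1 : q < 1 := pow_lt_one₀ hinv0.le hinv1 (by omega)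
  have hqne : q ≠ 0 := ne_of_gt hq0
  have hqn1 : q ^ n < 1 := pow_lt_one₀ hq0.le hq1 (by omega)
  have hqnpos : (0:ℝ) < q ^ n := pow_pos hq0 n
  have hPn : ((p:ℝ)) ^ (r₂ * n) = (q ^ n)⁻¹ := by
    rw [hq_def, ← pow_mul, one_div, inv_pow, inv_inv]
  clear_value a q
  have hQ : ∀ z : ℝ, littleQJacobi a q n z = ∑ k ∈ range (n + 1), cc a q n k * z ^ k := by
    intro z
    simp only [littleQJacobi, cc]
  set F : ℕ × ℕ → ℝ :=
    fun z => littleQJacobi a q n (q ^ z.1) * a ^ z.1 * q ^ n * (q ^ n * q ^ z.1) ^ z.2 with hF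
  set Cb : ℝ := ∑ k ∈ range (n + 1), |cc a q n k| with hCb
  have hQb : ∀ ℓ : ℕ, |littleQJacobi a q n (q ^ ℓ)| ≤ Cb := by
    intro ℓ
    rw [hQ]
    refine (Finset.abs_sum_le_sum_abs _ _).trans ?_
    apply Finset.sum_le_sum
    intro k _
    rw [abs_mul]
    have h1 : |((q:ℝ) ^ ℓ) ^ k| ≤ 1 := by
      rw [abs_of_nonneg (by positivity)]
      exact pow_le_one₀ (by positivity) (pow_le_one₀ hq0.le hq1.le)
    nlinarith [abs_nonneg (cc a q n k)]
  have hFsum : Summable F := by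
    apply Summable.of_norm_bounded (g := fun z : ℕ × ℕ => (Cb * q ^ n) * (a ^ z.1 * (q ^ n) ^ z.2))
    · apply Summable.mul_left
      exact (summable_geometric_of_lt_one ha0.le ha1).mul_of_nonneg
        (summable_geometric_of_lt_one hqnpos.le hqn1)
        (fun ℓ => pow_nonneg ha0.le ℓ) (fun m => pow_nonneg hqnpos.le m)
    · rintro ⟨ℓ, m⟩
      show ‖littleQJacobi a q n (q ^ ℓ) * a ^ ℓ * q ^ n * (q ^ n * q ^ ℓ) ^ m‖ ≤ _
      rw [Real.norm_eq_abs, abs_mul, abs_mul, abs_mul, abs_of_nonneg (a := a ^ ℓ) (by positivity),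
        abs_of_nonneg (a := (q:ℝ) ^ n) (by positivity),
        abs_of_nonneg (a := ((q:ℝ) ^ n * q ^ ℓ) ^ m) (by positivity)]
      have h2 : ((q:ℝ) ^ n * q ^ ℓ) ^ m ≤ (q ^ n) ^ m := by
        apply pow_le_pow_left₀ (by positivity)
        nlinarith [pow_le_one₀ hq0.le hq1.le (n := ℓ), pow_pos hq0 ℓ]
      calc |littleQJacobi a q n (q ^ ℓ)| * a ^ ℓ * q ^ n * ((q:ℝ) ^ n * q ^ ℓ) ^ m
          ≤ Cb * a ^ ℓ * q ^ n * (q ^ n) ^ m := by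
            apply mul_le_mul _ h2 (by positivity) (by positivity)
            apply mul_le_mul_of_nonneg_right _ hqnpos.le
            exact mul_le_mul_of_nonneg_right (hQb ℓ) (by positivity)
        _ = Cb * q ^ n * (a ^ ℓ * (q ^ n) ^ m) := by ring
  have hterm : ∀ ℓ : ℕ, littleQJacobi a q n (q ^ ℓ) * a ^ ℓ / ((q ^ n)⁻¹ - q ^ ℓ)
      = ∑' m : ℕ, F (ℓ, m) := by
    intro ℓ
    have hw1 : q ^ n * q ^ ℓ < 1 := by
      nlinarith [pow_le_one₀ hq0.le hq1.le (n := ℓ), pow_pos hq0 ℓ]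
    have hwne : (1:ℝ) - q ^ n * q ^ ℓ ≠ 0 := by nlinarith
    have h3 : ∑' m : ℕ, F (ℓ, m)
        = littleQJacobi a q n (q ^ ℓ) * a ^ ℓ * q ^ n * (1 - q ^ n * q ^ ℓ)⁻¹ := by
      rw [hF]
      simp only
      rw [tsum_mul_left, tsum_geometric_of_lt_one (by positivity) hw1]
    rw [h3]
    have hd : (q ^ n)⁻¹ - q ^ ℓ = (q ^ n)⁻¹ * (1 - q ^ n * q ^ ℓ) := by
      field_simp
    rw [hd]
    rw [div_eq_iff (by
      apply mul_ne_zero (inv_ne_zero (ne_of_gt hqnpos))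
      nlinarith)]
    field_simp
    rw [mul_comm (q ^ ℓ), mul_div_assoc, div_self hwne, mul_one]
  have hr : ∀ m k : ℕ, a * q ^ (m + k) < 1 := by
    intro m k
    nlinarith [pow_le_one₀ hq0.le hq1.le (n := m + k), pow_pos hq0 (m + k)]
  have hinner : ∀ m : ℕ, ∑' ℓ : ℕ, F (ℓ, m)
      = q ^ (n * (m + 1)) * ∑ k ∈ range (n + 1), cc a q n k * (1 - a * q ^ (m + k))⁻¹ := by
    intro m
    have hFeq : ∀ ℓ : ℕ, F (ℓ, m)
        = ∑ k ∈ range (n + 1), (cc a q n k * q ^ (n * (m + 1))) * (a * q ^ (m + k)) ^ ℓ := by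
      intro ℓ
      show littleQJacobi a q n (q ^ ℓ) * a ^ ℓ * q ^ n * (q ^ n * q ^ ℓ) ^ m = _
      rw [hQ (q ^ ℓ), Finset.sum_mul, Finset.sum_mul, Finset.sum_mul]
      apply Finset.sum_congr rfl
      intro k _
      have e1 : ((q:ℝ) ^ ℓ) ^ k = (q ^ k) ^ ℓ := by
        rw [← pow_mul, ← pow_mul, Nat.mul_comm]
      have e2 : ((q:ℝ) ^ n * q ^ ℓ) ^ m = (q ^ n) ^ m * (q ^ m) ^ ℓ := by
        rw [mul_pow]
        congr 1
        rw [← pow_mul, Nat.mul_comm, pow_mul]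
      have e3 : ((a:ℝ) * q ^ (m + k)) ^ ℓ = a ^ ℓ * ((q ^ m) ^ ℓ * (q ^ k) ^ ℓ) := by
        rw [mul_pow, pow_add, mul_pow]
      have e4 : (q:ℝ) ^ (n * (m + 1)) = q ^ n * (q ^ n) ^ m := by
        rw [← pow_mul, ← pow_add]
        congr 1
        ring
      rw [e1, e2, e3, e4]
      ring
    rw [tsum_congr hFeq, Summable.tsum_finsetSum (fun k _ =>
      ((summable_geometric_of_lt_one (by positivity) (hr m k)).mul_left _))]
    have h5 : ∀ k ∈ range (n + 1),
        ∑' ℓ : ℕ, (cc a q n k * q ^ (n * (m + 1))) * (a * q ^ (m + k)) ^ ℓ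
          = (cc a q n k * q ^ (n * (m + 1))) * (1 - a * q ^ (m + k))⁻¹ := by
      intro k _
      rw [tsum_mul_left, tsum_geometric_of_lt_one (by positivity) (hr m k)]
    rw [Finset.sum_congr rfl h5, Finset.mul_sum]
    apply Finset.sum_congr rfl
    intro k _
    ring
  set h : ℕ → ℝ := fun m => q ^ (n * (m + 1)) *
      ((∏ j ∈ range n, (1 - ((q:ℝ) ^ j)⁻¹ * q ^ m)) *
        (∏ j ∈ range (n + 1), (1 - a * q ^ (m + j)))⁻¹) with hh
  have hV : VV a q n ≠ 0 := VV_ne ha0 ha1 hq0 hq1 n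
  have hfm : ∀ m : ℕ, ∑' ℓ : ℕ, F (ℓ, m) = VV a q n * h m := by
    intro m
    rw [hinner m, Tm_eq ha0 ha1 hq0 hq1 n m]
    simp only [hh]
    ring
  have hsum_m : Summable fun m : ℕ => ∑' ℓ : ℕ, F (ℓ, m) := hFsum.prod_symm.prod
  have hsum_h : Summable h := by
    have h1 : Summable fun m => VV a q n * h m := by
      have := hsum_m
      rwa [funext hfm] at this
    have h2 := h1.mul_left (VV a q n)⁻¹
    have h3 : (fun m => (VV a q n)⁻¹ * (VV a q n * h m)) = h := by
      funext m
      rw [← mul_assoc, inv_mul_cancel₀ hV, one_mul]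
    rwa [h3] at h2
  have hDpos : ∀ m : ℕ, (0:ℝ) < ∏ j ∈ range (n + 1), (1 - a * q ^ (m + j)) := by
    intro m
    apply Finset.prod_pos
    intro j _
    nlinarith [hr m j, pow_pos hq0 (m + j), pow_le_one₀ hq0.le hq1.le (n := m + j)]
  have hNpos : ∀ m : ℕ, n ≤ m → (0:ℝ) < ∏ j ∈ range n, (1 - ((q:ℝ) ^ j)⁻¹ * q ^ m) := by
    intro m hm
    apply Finset.prod_pos
    intro j hj
    rw [Finset.mem_range] at hj
    have hjm : j < m := by omega
    have e1 : ((q:ℝ) ^ j)⁻¹ * q ^ m = q ^ (m - j) := by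
      have : (q:ℝ) ^ m = q ^ j * q ^ (m - j) := by
        rw [← pow_add]
        congr 1
        omega
      rw [this, ← mul_assoc, inv_mul_cancel₀ (pow_ne_zero j hqne), one_mul]
    rw [e1]
    have : (q:ℝ) ^ (m - j) < 1 := pow_lt_one₀ hq0.le hq1 (by omega)
    linarith
  have hNzero : ∀ m : ℕ, m < n → ∏ j ∈ range n, (1 - ((q:ℝ) ^ j)⁻¹ * q ^ m) = 0 := by
    intro m hm
    apply Finset.prod_eq_zero (Finset.mem_range.2 hm)
    rw [inv_mul_cancel₀ (pow_ne_zero m hqne), sub_self]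
  have hh_nonneg : ∀ m : ℕ, 0 ≤ h m := by
    intro m
    simp only [hh]
    rcases lt_or_ge m n with hmn | hmn
    · rw [hNzero m hmn]
      simp
    · have := hNpos m hmn
      have := hDpos m
      positivity
  have hh_pos : 0 < h n := by
    simp only [hh]
    have h1 := hNpos n le_rfl
    have h2 := hDpos n
    positivity
  have hS : 0 < ∑' m, h m := Summable.tsum_pos hsum_h hh_nonneg n hh_pos
  have hgoal : (∑' ℓ : ℕ,
      littleQJacobi a q n (q ^ ℓ) * a ^ ℓ / ((p : ℝ) ^ (r₂ * n) - q ^ ℓ))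
      = VV a q n * ∑' m, h m := by
    calc (∑' ℓ : ℕ, littleQJacobi a q n (q ^ ℓ) * a ^ ℓ / ((p : ℝ) ^ (r₂ * n) - q ^ ℓ))
        = ∑' ℓ : ℕ, ∑' m : ℕ, F (ℓ, m) := by
          apply tsum_congr
          intro ℓ
          rw [hPn]
          exact hterm ℓ
      _ = ∑' m : ℕ, ∑' ℓ : ℕ, F (ℓ, m) :=
          (Summable.tsum_comm (f := fun (ℓ m : ℕ) => F (ℓ, m)) hFsum).symm
      _ = ∑' m : ℕ, VV a q n * h m := tsum_congr hfm
      _ = VV a q n * ∑' m, h m := tsum_mul_left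
  rw [hgoal]
  exact mul_ne_zero hV (ne_of_gt hS)

end Main
end

section
/- Let $p \geq 2$ be an integer, $q = 1/p$. Then $\sum_{k=1}^\infty \frac{q^k}{1 - q^k}$ (i.e., $\zeta_q(1)$) is irrational. -/
open Finset

namespace QH

/-- `piZ p m = ∏_{i=1}^m (p^i - 1)` -/
def piZ (p m : ℕ) : ℤ := ∏ i ∈ Finset.range m, ((p:ℤ)^(i+1) - 1)

/-- triangular number m(m+1)/2 -/
def T (m : ℕ) : ℕ := ∑ i ∈ Finset.range m, (i+1)

def wZ (p n k : ℕ) : ℤ := ∏ i ∈ (Finset.range n).erase k, ((p:ℤ)^(i+1) - 1)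

lemma piZ_succ (p m : ℕ) : piZ p (m+1) = piZ p m * ((p:ℤ)^(m+1) - 1) := Finset.prod_range_succ _ _

lemma piZ_pos (p : ℕ) (hp : 2 ≤ p) (m : ℕ) : 0 < piZ p m := by
  apply Finset.prod_pos
  intro i _
  have : (2:ℤ) ≤ (p:ℤ) := by exact_mod_cast hp
  have h1 : (2:ℤ)^(i+1) ≤ (p:ℤ)^(i+1) := pow_le_pow_left₀ (by norm_num) this _
  have h2 : (2:ℤ) ≤ 2^(i+1) := by
    calc (2:ℤ) = 2^1 := by norm_num
    _ ≤ 2^(i+1) := pow_le_pow_right₀ (by norm_num) (by omega)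
  omega

lemma T_succ (m : ℕ) : T (m+1) = T m + (m+1) := Finset.sum_range_succ _ _

lemma T_add (a b : ℕ) : T (a+b) = T a + T b + a*b := by
  induction b with
  | zero => simp [T]
  | succ b ih => rw [← Nat.add_assoc, T_succ, ih, T_succ]; ring

lemma T_le (n : ℕ) : T n ≤ n * n := by
  unfold T
  calc ∑ i ∈ Finset.range n, (i+1) ≤ ∑ _i ∈ Finset.range n, n := by
        apply Finset.sum_le_sum; intro i hi; simp at hi; omega
  _ = n * n := by simp [Finset.sum_const, smul_eq_mul, Nat.mul_comm]

/-- Gaussian binomial integrality -/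
lemma gauss (p : ℕ) : ∀ m k : ℕ, k ≤ m → piZ p k * piZ p (m-k) ∣ piZ p m := by
  intro m
  induction m with
  | zero => intro k hk; interval_cases k; simp [piZ]
  | succ m ih =>
    intro k hk
    rcases Nat.eq_zero_or_pos k with rfl | hk0
    · simp [piZ]
    rcases eq_or_lt_of_le hk with rfl | hlt
    · simp [piZ]
    -- 1 ≤ k ≤ m
    obtain ⟨k', rfl⟩ : ∃ k', k = k'+1 := ⟨k-1, by omega⟩
    have hk'm : k' + 1 ≤ m := by omega
    obtain ⟨r, rfl⟩ : ∃ r, m = k'+1+r := ⟨m - (k'+1), by omega⟩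
    obtain ⟨b1, hb1⟩ := ih k' (by omega)
    obtain ⟨b2, hb2⟩ := ih (k'+1) (by omega)
    have e1 : k' + 1 + r - k' = r + 1 := by omega
    have e2 : k' + 1 + r - (k'+1) = r := by omega
    rw [e1] at hb1; rw [e2] at hb2
    have e3 : k' + 1 + r + 1 - (k'+1) = r + 1 := by omega
    rw [e3]
    refine ⟨b1 + (p:ℤ)^(k'+1) * b2, ?_⟩
    have h1 : piZ p (k'+1+r+1) = piZ p (k'+1+r) * ((p:ℤ)^(k'+1+r+1) - 1) := piZ_succ _ _
    have h2 : piZ p (k'+1) = piZ p k' * ((p:ℤ)^(k'+1) - 1) := piZ_succ _ _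
    have h3 : piZ p (r+1) = piZ p r * ((p:ℤ)^(r+1) - 1) := piZ_succ _ _
    have hpow : (p:ℤ)^(k'+1+r+1) = (p:ℤ)^(k'+1) * (p:ℤ)^(r+1) := by rw [← pow_add]; ring_nf
    calc piZ p (k'+1+r+1) = piZ p (k'+1+r) * ((p:ℤ)^(k'+1+r+1) - 1) := h1
    _ = piZ p (k'+1+r) * ((p:ℤ)^(k'+1) - 1) + piZ p (k'+1+r) * ((p:ℤ)^(k'+1) * ((p:ℤ)^(r+1) - 1)) := by
        rw [hpow]; ring
    _ = piZ p (k'+1) * piZ p (r+1) * (b1 + (p:ℤ)^(k'+1) * b2) := by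
        nth_rewrite 1 [hb1]; nth_rewrite 1 [hb2]; rw [h2, h3]; ring

lemma dvd_d (p n j : ℕ) (hj : j ≤ n) : piZ p j ^ 2 * piZ p (n-j) ∣ piZ p (n+j) := by
  have h1 : piZ p j * piZ p (n-j) ∣ piZ p n := gauss p n j hj
  have h2 : piZ p j * piZ p n ∣ piZ p (n+j) := by
    have h := gauss p (n+j) j (by omega)
    have e : n + j - j = n := by omega
    rw [e] at h
    exact h
  calc piZ p j ^2 * piZ p (n-j) = piZ p j * (piZ p j * piZ p (n-j)) := by ring
  _ ∣ piZ p j * piZ p n := mul_dvd_mul_left _ h1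
  _ ∣ piZ p (n+j) := h2

def dZ (p n j : ℕ) : ℤ := piZ p (n+j) / (piZ p j ^2 * piZ p (n-j))

lemma dZ_spec (p n j : ℕ) (hj : j ≤ n) : piZ p j ^2 * piZ p (n-j) * dZ p n j = piZ p (n+j) :=
  Int.mul_ediv_cancel' (dvd_d p n j hj)


section Real
variable {p : ℕ} (hp : 2 ≤ p)

local notation "x" => ((p:ℝ))

include hp

lemma hx2 : (2:ℝ) ≤ x := by exact_mod_cast hp
lemma hx1 : (1:ℝ) < x := lt_of_lt_of_le one_lt_two (hx2 hp)
lemma hx0 : (0:ℝ) < x := lt_trans one_pos (hx1 hp)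
lemma hxi1 : x⁻¹ < 1 := inv_lt_one_of_one_lt₀ (hx1 hp)
lemma hxi0 : (0:ℝ) < x⁻¹ := inv_pos.mpr (hx0 hp)

lemma one_lt_pow' (ν : ℕ) : (1:ℝ) < x^(ν+1) := one_lt_pow₀ (hx1 hp) (by omega)

/-- x^{m+1} - 1 ≥ x^m -/
lemma sub_one_ge (m : ℕ) : x^m ≤ x^(m+1) - 1 := by
  have h1 : (1:ℝ) ≤ x^m := one_le_pow₀ (le_of_lt (hx1 hp))
  have : x^m * 1 ≤ x^m * (x - 1) := by
    apply mul_le_mul_of_nonneg_left _ (le_of_lt (lt_of_lt_of_le one_pos h1))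
    linarith [hx2 hp]
  have hxx : x^m * (x-1) = x^(m+1) - x^m := by ring
  linarith

lemma summable_geo : Summable (fun m : ℕ => (x⁻¹)^m) :=
  summable_geometric_of_lt_one (le_of_lt (hxi0 hp)) (hxi1 hp)

lemma summable_of_bounds (f : ℕ → ℝ) (h0 : ∀ m, 0 ≤ f m) (h1 : ∀ m, f m ≤ (x⁻¹)^m) :
    Summable f :=
  Summable.of_nonneg_of_le h0 h1 (summable_geo hp)

/-- summand of G -/
lemma G_term_pos (e c : ℕ) (m : ℕ) : 0 < 1/((x^(m+c+1))^e * (x^(m+c+1) - 1)) := by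
  apply div_pos one_pos
  apply mul_pos (pow_pos (lt_trans one_pos (one_lt_pow' hp _)) _)
  linarith [one_lt_pow' hp (m+c)]

lemma G_term_le (e c : ℕ) (m : ℕ) : 1/((x^(m+c+1))^e * (x^(m+c+1) - 1)) ≤ (x⁻¹)^m := by
  have hpow1 : (1:ℝ) ≤ (x^(m+c+1))^e := one_le_pow₀ (le_of_lt (one_lt_pow' hp _))
  have hd : x^m ≤ (x^(m+c+1))^e * (x^(m+c+1) - 1) := by
    calc x^m ≤ x^(m+c) := pow_le_pow_right₀ (le_of_lt (hx1 hp)) (by omega)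
    _ ≤ x^(m+c+1) - 1 := sub_one_ge hp (m+c)
    _ = 1 * (x^(m+c+1) - 1) := (one_mul _).symm
    _ ≤ (x^(m+c+1))^e * (x^(m+c+1) - 1) := by
        apply mul_le_mul_of_nonneg_right hpow1
        linarith [one_lt_pow' hp (m+c)]
  rw [inv_pow, ← one_div]
  apply div_le_div_of_nonneg_left one_pos.le ?_ ?_ |>.trans_eq rfl
  · exact pow_pos (hx0 hp) m
  · exact hd


lemma summable_geo2 (e c : ℕ) : Summable (fun m : ℕ => ((x^(m+c+1))^(e+1))⁻¹) := by
  apply summable_of_bounds hp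
  · intro m
    positivity
  · intro m
    have hX1 : (1:ℝ) < x^(m+c+1) := one_lt_pow' hp _
    have h1 : x^m ≤ (x^(m+c+1))^(e+1) := by
      calc x^m ≤ x^(m+c+1) := pow_le_pow_right₀ (le_of_lt (hx1 hp)) (by omega)
      _ = (x^(m+c+1))^1 := (pow_one _).symm
      _ ≤ (x^(m+c+1))^(e+1) := pow_le_pow_right₀ (le_of_lt hX1) (by omega)
    rw [inv_pow, ← one_div, ← one_div]
    apply div_le_div_of_nonneg_left one_pos.le (pow_pos (hx0 hp) m) h1


lemma summable_G (e c : ℕ) : Summable (fun m : ℕ => 1/((x^(m+c+1))^e * (x^(m+c+1) - 1))) :=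
  summable_of_bounds hp _ (fun m => (G_term_pos hp e c m).le) (fun m => G_term_le hp e c m)


/-- the q-harmonic value -/
noncomputable def A (p : ℕ) : ℝ := ∑' ν : ℕ, 1/((p:ℝ)^(ν+1) - 1)

/-- tail of weighted series: `G p e j = ∑_{μ > j} x^{-eμ}/(x^μ-1)` -/
noncomputable def G (p e j : ℕ) : ℝ := ∑' m : ℕ, 1/(((p:ℝ)^(m+j+1))^e * ((p:ℝ)^(m+j+1) - 1))

noncomputable def Hs (p j : ℕ) : ℝ := ∑ i ∈ Finset.range j, 1/((p:ℝ)^(i+1) - 1)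

noncomputable def Ks (p e j : ℕ) : ℝ := ∑ k ∈ Finset.range e, 1/(((p:ℝ)^(k+1))^j * ((p:ℝ)^(k+1) - 1))

lemma G_zero (j : ℕ) : G p 0 j = A p - Hs p j := by
  have h := Summable.sum_add_tsum_nat_add (f := fun ν : ℕ => 1/((x:ℝ)^(ν+1) - 1)) j
    (by simpa using summable_G hp 0 0)
  unfold G A Hs
  simp only [pow_zero, one_mul]
  have hc : ∀ m : ℕ, (1:ℝ)/(x^(m+j+1) - 1) = 1/(x^((m+j)+1) - 1) := by
    intro m; ring_nf
  rw [tsum_congr hc]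
  linarith [h]

/-- geometric tail -/
lemma geo_tail (e j : ℕ) :
    ∑' m : ℕ, ((x^(m+j+1))^(e+1))⁻¹ = 1/((x^(e+1))^j * (x^(e+1) - 1)) := by
  have hy1 : (1:ℝ) < x^(e+1) := one_lt_pow' hp _
  have hy0 : (0:ℝ) < x^(e+1) := lt_trans one_pos hy1
  have hy01 : (0:ℝ) ≤ (x^(e+1))⁻¹ := (inv_pos.mpr hy0).le
  have hylt : (x^(e+1))⁻¹ < 1 := inv_lt_one_of_one_lt₀ hy1
  have hterm : ∀ m : ℕ, ((x^(m+j+1))^(e+1))⁻¹ = ((x^(e+1))⁻¹)^(j+1) * ((x^(e+1))⁻¹)^m := by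
    intro m
    rw [← pow_add, inv_pow, ← pow_mul, ← pow_mul]
    congr 2
    ring
  rw [tsum_congr hterm, tsum_mul_left, tsum_geometric_of_lt_one hy01 hylt]
  have hne : x^(e+1) - 1 ≠ 0 := by linarith
  have hne2 : (x:ℝ)^(e+1) ≠ 0 := ne_of_gt hy0
  field_simp
  linear_combination mul_inv_cancel₀ (pow_ne_zero (j+1) hne2)

/-- main recursion for G -/
lemma G_eq (e j : ℕ) : G p e j = A p - Hs p j - Ks p e j := by
  induction e with
  | zero => rw [G_zero hp]; unfold Ks; simp
  | succ e ih =>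
    have hsub : ∀ m : ℕ, (1:ℝ)/((x^(m+j+1))^(e+1) * (x^(m+j+1) - 1))
        = 1/((x^(m+j+1))^e * (x^(m+j+1) - 1)) - ((x^(m+j+1))^(e+1))⁻¹ := by
      intro m
      have hX1 : (1:ℝ) < x^(m+j+1) := one_lt_pow' hp _
      have h1 : x^(m+j+1) - 1 ≠ 0 := by linarith
      have h2 : (x:ℝ)^(m+j+1) ≠ 0 := by positivity
      field_simp
      ring
    unfold G
    rw [tsum_congr hsub, Summable.tsum_sub (summable_G hp e j) (summable_geo2 hp e j)]
    have hG : (∑' m : ℕ, 1/((x^(m+j+1))^e * (x^(m+j+1) - 1))) = G p e j := rfl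
    rw [hG, ih, geo_tail hp e j]
    unfold Ks
    rw [Finset.sum_range_succ]
    ring



/-- `Sig p n j = ∑_{ν≥1} x^{-nν}/(x^ν - x^{-j})` -/
noncomputable def Sig (p n j : ℕ) : ℝ :=
  ∑' m : ℕ, 1/(((p:ℝ)^(m+1))^n * ((p:ℝ)^(m+1) - ((p:ℝ)⁻¹)^j))

lemma Sig_term (n j m : ℕ) :
    1/((x^(m+1))^n * (x^(m+1) - (x⁻¹)^j))
      = x^(j*(n+1)) * (1/((x^(m+j+1))^n * (x^(m+j+1) - 1))) := by
  have hxne : (x:ℝ) ≠ 0 := by positivity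
  have h1 : (x:ℝ)^j * (x⁻¹)^j = 1 := by
    rw [← mul_pow, mul_inv_cancel₀ hxne, one_pow]
  have e1 : (x:ℝ)^(m+j+1) = x^(m+1) * x^j := by rw [← pow_add]; ring_nf
  have e2 : (x:ℝ)^(j*(n+1)) = (x^j)^n * x^j := by rw [← pow_mul, ← pow_add]; ring_nf
  have key : (x^(m+j+1))^n * (x^(m+j+1) - 1)
      = x^(j*(n+1)) * ((x^(m+1))^n * (x^(m+1) - (x⁻¹)^j)) := by
    rw [e1, e2, mul_pow]
    linear_combination ((x^(m+1))^n * ((x:ℝ)^j)^n) * h1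
  rw [key]
  have hD1 : (0:ℝ) < (x^(m+1))^n * (x^(m+1) - (x⁻¹)^j) := by
    apply mul_pos (pow_pos (pow_pos (hx0 hp) _) _)
    have hv : (x⁻¹ : ℝ)^j ≤ 1 := pow_le_one₀ (hxi0 hp).le (hxi1 hp).le
    linarith [one_lt_pow' hp m]
  have hP : (0:ℝ) < x^(j*(n+1)) := pow_pos (hx0 hp) _
  rw [mul_one_div, div_eq_div_iff hD1.ne' (by positivity)]
  ring

lemma summable_Sig (n j : ℕ) :
    Summable (fun m : ℕ => 1/((x^(m+1))^n * (x^(m+1) - (x⁻¹)^j))) := by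
  have := (summable_G hp n j).mul_left ((x:ℝ)^(j*(n+1)))
  exact this.congr (fun m => (Sig_term hp n j m).symm)

lemma Sig_eq (n j : ℕ) : Sig p n j = x^(j*(n+1)) * G p n j := by
  unfold Sig G
  rw [tsum_congr (fun m => Sig_term hp n j m), tsum_mul_left]



/-! ### Lagrange / partial fractions -/

noncomputable def vv (p : ℕ) (i : ℕ) : ℝ := ((p:ℝ)⁻¹)^i

noncomputable def cc (p n j : ℕ) : ℝ := (-1)^(n+j) * (p:ℝ)^(T (n-j)) * (dZ p n j : ℝ)

noncomputable def Fpoly (p n : ℕ) : Polynomial ℝ :=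
  ∏ i ∈ Finset.range n, (Polynomial.X - Polynomial.C ((p:ℝ)^(i+1)))

lemma piR_eq (m : ℕ) : ((piZ p m : ℤ) : ℝ) = ∏ i ∈ Finset.range m, (x^(i+1) - 1) := by
  unfold piZ
  push_cast
  rfl

lemma piR_pos (m : ℕ) : (0:ℝ) < ((piZ p m : ℤ) : ℝ) := by exact_mod_cast piZ_pos p hp m

lemma vv_injOn (n : ℕ) : Set.InjOn (vv p) ↑(Finset.range (n+1)) := by
  have : Function.Injective (vv p) := by
    intro i j h
    exact (pow_right_strictAnti₀ (hxi0 hp) (hxi1 hp)).injective h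
  exact this.injOn

lemma vv_le_one (i : ℕ) : vv p i ≤ 1 := pow_le_one₀ (hxi0 hp).le (hxi1 hp).le

lemma vv_pos (i : ℕ) : 0 < vv p i := pow_pos (hxi0 hp) i

/-- P1: value of F at node `vv j` -/
lemma eval_node (n j : ℕ) :
    (Fpoly p n).eval (vv p j) * x^(n*j) * ((piZ p j : ℤ):ℝ) = (-1)^n * ((piZ p (n+j) : ℤ):ℝ) := by
  have hxne : (x:ℝ) ≠ 0 := by positivity
  have heval : (Fpoly p n).eval (vv p j) = ∏ i ∈ Finset.range n, (vv p j - x^(i+1)) := by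
    unfold Fpoly
    rw [Polynomial.eval_prod]
    simp
  have hfac : ∀ i ∈ Finset.range n, vv p j - x^(i+1) = (-(x⁻¹)^j) * (x^(i+j+1) - 1) := by
    intro i _
    unfold vv
    have h2 : ((x:ℝ)⁻¹)^j * x^(i+j+1) = x^(i+1) := by
      have h3 : (x:ℝ)^(i+j+1) = x^(i+1) * x^j := by rw [← pow_add]; ring_nf
      rw [h3, inv_pow]
      field_simp
    linear_combination h2
  rw [heval, Finset.prod_congr rfl hfac, Finset.prod_mul_distrib, Finset.prod_const, Finset.card_range]
  have hsplit : ((piZ p (n+j) : ℤ):ℝ) = ((piZ p j : ℤ):ℝ) * ∏ i ∈ Finset.range n, (x^(j+i+1) - 1) := by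
    rw [piR_eq hp, piR_eq hp, Nat.add_comm n j]
    simpa using Finset.prod_range_add (fun i => (x^(i+1) - 1)) j n
  rw [hsplit]
  have hps : ∀ i ∈ Finset.range n, (x:ℝ)^(i+j+1) - 1 = x^(j+i+1) - 1 := by
    intro i _; ring_nf
  rw [Finset.prod_congr rfl hps]
  have hneg : (-(x⁻¹:ℝ)^j)^n = (-1)^n * ((x⁻¹)^(j*n)) := by
    rw [neg_pow, ← pow_mul]
  rw [hneg]
  have hcan : ((x⁻¹:ℝ))^(j*n) * x^(n*j) = 1 := by
    rw [inv_pow, inv_mul_eq_div, div_eq_one_iff_eq (by positivity)]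
    ring_nf
  calc (-1:ℝ)^n * (x⁻¹)^(j*n) * (∏ i ∈ Finset.range n, (x^(j+i+1) - 1)) * x^(n*j) * ((piZ p j : ℤ):ℝ)
      = ((x⁻¹)^(j*n) * x^(n*j)) * ((-1)^n * (∏ i ∈ Finset.range n, (x^(j+i+1) - 1)) * ((piZ p j : ℤ):ℝ)) := by ring
    _ = (-1)^n * (((piZ p j : ℤ):ℝ) * ∏ i ∈ Finset.range n, (x^(j+i+1) - 1)) := by rw [hcan]; ring



lemma erase_split (n j : ℕ) (hj : j ≤ n) :
    (Finset.range (n+1)).erase j = Finset.range j ∪ Finset.Ico (j+1) (n+1) := by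
  ext i
  simp only [Finset.mem_erase, Finset.mem_range, Finset.mem_union, Finset.mem_Ico]
  omega

/-- P2: product over erased nodes -/
lemma prod_erase_eq (n j : ℕ) (hj : j ≤ n) :
    (∏ i ∈ (Finset.range (n+1)).erase j, (vv p j - vv p i))
        * x^(j*j + ∑ i ∈ Finset.Ico (j+1) (n+1), i)
      = (-1)^j * ((piZ p j : ℤ):ℝ) * ((piZ p (n-j) : ℤ):ℝ) := by
  have hxne : (x:ℝ) ≠ 0 := by positivity
  rw [erase_split hp n j hj, Finset.prod_union (by
    rw [Finset.disjoint_left]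
    intro i hi hi2
    simp only [Finset.mem_range] at hi
    simp only [Finset.mem_Ico] at hi2
    omega)]
  -- lower part
  have hlow : (∏ i ∈ Finset.range j, (vv p j - vv p i))
      = (-1)^j * (x⁻¹)^(j*j) * ((piZ p j : ℤ):ℝ) := by
    have hfac : ∀ i ∈ Finset.range j, vv p j - vv p i = (-(x⁻¹)^j) * (x^(j-i) - 1) := by
      intro i hi
      simp only [Finset.mem_range] at hi
      unfold vv
      have h2 : ((x:ℝ)⁻¹)^j * x^(j-i) = (x⁻¹)^i := by
        have h3 : ((x:ℝ)⁻¹)^j = (x⁻¹)^i * (x⁻¹)^(j-i) := by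
          rw [← pow_add]
          congr 1
          omega
        have hcancel : ((x:ℝ)⁻¹)^(j-i) * x^(j-i) = 1 := by
          rw [inv_pow]
          exact inv_mul_cancel₀ (by positivity)
        rw [h3, mul_assoc, hcancel, mul_one]
      linear_combination h2
    rw [Finset.prod_congr rfl hfac, Finset.prod_mul_distrib, Finset.prod_const, Finset.card_range]
    have hrefl : (∏ i ∈ Finset.range j, ((x:ℝ)^(j-i) - 1)) = ((piZ p j : ℤ):ℝ) := by
      rw [piR_eq hp]
      rw [← Finset.prod_range_reflect (fun i => ((x:ℝ)^(i+1) - 1)) j]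
      apply Finset.prod_congr rfl
      intro i hi
      simp only [Finset.mem_range] at hi
      congr 2
      omega
    rw [hrefl, neg_pow, ← pow_mul]
  -- upper part
  have hup : (∏ i ∈ Finset.Ico (j+1) (n+1), (vv p j - vv p i))
      = (x⁻¹)^(∑ i ∈ Finset.Ico (j+1) (n+1), i) * ((piZ p (n-j) : ℤ):ℝ) := by
    have hfac : ∀ i ∈ Finset.Ico (j+1) (n+1), vv p j - vv p i = (x⁻¹)^i * (x^(i-j) - 1) := by
      intro i hi
      simp only [Finset.mem_Ico] at hi
      unfold vv
      have h2 : ((x:ℝ)⁻¹)^i * x^(i-j) = (x⁻¹)^j := by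
        have h3 : ((x:ℝ)⁻¹)^i = (x⁻¹)^j * (x⁻¹)^(i-j) := by
          rw [← pow_add]
          congr 1
          omega
        have hcancel : ((x:ℝ)⁻¹)^(i-j) * x^(i-j) = 1 := by
          rw [inv_pow]
          exact inv_mul_cancel₀ (by positivity)
        rw [h3, mul_assoc, hcancel, mul_one]
      linear_combination -h2
    rw [Finset.prod_congr rfl hfac, Finset.prod_mul_distrib]
    congr 1
    · rw [Finset.prod_pow_eq_pow_sum]
    · rw [piR_eq hp, Finset.prod_Ico_eq_prod_range]
      apply Finset.prod_congr (by congr 1; omega)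
      intro i hi
      simp only [Finset.mem_range] at hi
      congr 2
      omega
  rw [hlow, hup, pow_add]
  have hc1 : ((x⁻¹:ℝ))^(j*j) * x^(j*j) = 1 := by
    rw [inv_pow, inv_mul_cancel₀ (by positivity)]
  have hc2 : ((x⁻¹:ℝ))^(∑ i ∈ Finset.Ico (j+1) (n+1), i) * x^(∑ i ∈ Finset.Ico (j+1) (n+1), i) = 1 := by
    rw [inv_pow, inv_mul_cancel₀ (by positivity)]
  calc (-1:ℝ)^j * (x⁻¹)^(j*j) * ((piZ p j : ℤ):ℝ)
        * ((x⁻¹)^(∑ i ∈ Finset.Ico (j+1) (n+1), i) * ((piZ p (n-j) : ℤ):ℝ))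
        * (x^(j*j) * x^(∑ i ∈ Finset.Ico (j+1) (n+1), i))
      = ((x⁻¹)^(j*j) * x^(j*j))
        * (((x⁻¹)^(∑ i ∈ Finset.Ico (j+1) (n+1), i)) * x^(∑ i ∈ Finset.Ico (j+1) (n+1), i))
        * ((-1)^j * ((piZ p j : ℤ):ℝ) * ((piZ p (n-j) : ℤ):ℝ)) := by ring
    _ = (-1)^j * ((piZ p j : ℤ):ℝ) * ((piZ p (n-j) : ℤ):ℝ) := by rw [hc1, hc2]; ring

/-- exponent identity -/
lemma exp_id (n j : ℕ) (hj : j ≤ n) :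
    T (n-j) + n*j = j*j + ∑ i ∈ Finset.Ico (j+1) (n+1), i := by
  obtain ⟨r, rfl⟩ : ∃ r, n = j + r := ⟨n - j, by omega⟩
  have h1 : (∑ i ∈ Finset.Ico (j+1) (j+r+1), i) = ∑ m ∈ Finset.range r, (j+1+m) := by
    rw [Finset.sum_Ico_eq_sum_range]
    apply Finset.sum_congr (by congr 1; omega)
    intro m _
    omega
  have h2 : (∑ m ∈ Finset.range r, (j+1+m)) = r*j + T r := by
    have hc : ∀ m ∈ Finset.range r, j+1+m = j + (m+1) := by intro m _; omega
    rw [Finset.sum_congr rfl hc, Finset.sum_add_distrib, Finset.sum_const, Finset.card_range,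
      smul_eq_mul]
    unfold T
    omega
  rw [h1, h2]
  have h3 : j + r - j = r := by omega
  rw [h3]
  ring



lemma cc_spec (n j : ℕ) (hj : j ≤ n) :
    cc p n j * (∏ i ∈ (Finset.range (n+1)).erase j, (vv p j - vv p i))
      = (Fpoly p n).eval (vv p j) := by
  have hA1 := eval_node hp n j
  have hA2 := prod_erase_eq hp n j hj
  have hA3 : ((piZ p j :ℤ):ℝ)^2 * ((piZ p (n-j):ℤ):ℝ) * ((dZ p n j :ℤ):ℝ)
      = ((piZ p (n+j):ℤ):ℝ) := by exact_mod_cast dZ_spec p n j hj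
  have hE := exp_id hp n j hj
  have hsgn : ((-1:ℝ))^(n+j) * (-1)^j = (-1)^n := by
    rw [← pow_add]
    have h4 : n+j+j = n + 2*j := by omega
    rw [h4, pow_add, pow_mul]
    norm_num
  have hxp : (x:ℝ)^(T (n-j)) * x^(n*j) = x^(j*j + ∑ i ∈ Finset.Ico (j+1) (n+1), i) := by
    rw [← pow_add, hE]
  have hM : (x:ℝ)^(n*j) * x^(j*j + ∑ i ∈ Finset.Ico (j+1) (n+1), i) * ((piZ p j:ℤ):ℝ) ≠ 0 := by
    apply mul_ne_zero (mul_ne_zero (by positivity) (by positivity)) (piR_pos hp j).ne'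
  apply mul_right_cancel₀ hM
  calc cc p n j * (∏ i ∈ (Finset.range (n+1)).erase j, (vv p j - vv p i))
        * ((x:ℝ)^(n*j) * x^(j*j + ∑ i ∈ Finset.Ico (j+1) (n+1), i) * ((piZ p j:ℤ):ℝ))
      = ((-1)^(n+j) * (x:ℝ)^(T (n-j)) * ((dZ p n j :ℤ):ℝ)) * ((x:ℝ)^(n*j) * ((piZ p j:ℤ):ℝ))
        * ((∏ i ∈ (Finset.range (n+1)).erase j, (vv p j - vv p i))
            * x^(j*j + ∑ i ∈ Finset.Ico (j+1) (n+1), i)) := by unfold cc; ring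
    _ = ((-1)^(n+j) * (x:ℝ)^(T (n-j)) * ((dZ p n j :ℤ):ℝ)) * ((x:ℝ)^(n*j) * ((piZ p j:ℤ):ℝ))
        * ((-1)^j * ((piZ p j : ℤ):ℝ) * ((piZ p (n-j) : ℤ):ℝ)) := by rw [hA2]
    _ = ((-1)^(n+j) * (-1)^j) * ((x:ℝ)^(T (n-j)) * x^(n*j))
        * (((piZ p j :ℤ):ℝ)^2 * ((piZ p (n-j):ℤ):ℝ) * ((dZ p n j :ℤ):ℝ)) := by ring
    _ = (-1)^n * x^(j*j + ∑ i ∈ Finset.Ico (j+1) (n+1), i) * ((piZ p (n+j):ℤ):ℝ) := by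
        rw [hsgn, hxp, hA3]
    _ = ((Fpoly p n).eval (vv p j) * x^(n*j) * ((piZ p j : ℤ):ℝ))
        * x^(j*j + ∑ i ∈ Finset.Ico (j+1) (n+1), i) := by rw [hA1]; ring
    _ = (Fpoly p n).eval (vv p j)
        * ((x:ℝ)^(n*j) * x^(j*j + ∑ i ∈ Finset.Ico (j+1) (n+1), i) * ((piZ p j:ℤ):ℝ)) := by ring

lemma Fpoly_degree (n : ℕ) : (Fpoly p n).degree < (Finset.range (n+1)).card := by
  have h : (Fpoly p n).degree ≤ n := by
    unfold Fpoly
    apply le_trans (Polynomial.degree_prod_le _ _)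
    apply le_trans (Finset.sum_le_card_nsmul _ _ 1 ?_)
    · simp
    · intro i _
      exact Polynomial.degree_X_sub_C_le _
  rw [Finset.card_range]
  exact lt_of_le_of_lt h (by exact_mod_cast Nat.lt_succ_self n)

/-- Lagrange expansion of Fpoly -/
lemma lagrange_eval (n : ℕ) (t : ℝ) :
    (Fpoly p n).eval t
      = ∑ j ∈ Finset.range (n+1), cc p n j * ∏ i ∈ (Finset.range (n+1)).erase j, (t - vv p i) := by
  have hinj := vv_injOn hp n
  have hdeg := Fpoly_degree hp n
  have hinterp := Lagrange.eq_interpolate (v := vv p) (f := Fpoly p n) hinj hdeg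
  conv_lhs => rw [hinterp]
  rw [Lagrange.interpolate_apply, Polynomial.eval_finset_sum]
  apply Finset.sum_congr rfl
  intro j hj
  simp only [Finset.mem_range] at hj
  rw [Polynomial.eval_mul, Polynomial.eval_C]
  have hbasis : (Lagrange.basis (Finset.range (n+1)) (vv p) j).eval t
      = (∏ i ∈ (Finset.range (n+1)).erase j, (vv p j - vv p i))⁻¹
        * ∏ i ∈ (Finset.range (n+1)).erase j, (t - vv p i) := by
    unfold Lagrange.basis
    rw [Polynomial.eval_prod]
    have hterm : ∀ i ∈ (Finset.range (n+1)).erase j,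
        (Lagrange.basisDivisor (vv p j) (vv p i)).eval t
          = (vv p j - vv p i)⁻¹ * (t - vv p i) := by
      intro i _
      unfold Lagrange.basisDivisor
      simp
    rw [Finset.prod_congr rfl hterm, Finset.prod_mul_distrib, ← Finset.prod_inv_distrib]
  rw [hbasis]
  have hne : (∏ i ∈ (Finset.range (n+1)).erase j, (vv p j - vv p i)) ≠ 0 := by
    apply Finset.prod_ne_zero_iff.mpr
    intro i hi
    rw [Finset.mem_erase] at hi
    have : vv p j ≠ vv p i := by
      intro hcon
      have hmem : i ∈ ↑(Finset.range (n+1)) := by simpa using hi.2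
      have hji : j = i := hinj (by simp [hj]) hmem hcon
      exact hi.1 hji.symm
    exact sub_ne_zero_of_ne this
  rw [← cc_spec hp n j (by omega)]
  field_simp



/-! ### The linear form -/

noncomputable def tS (p n m : ℕ) : ℝ :=
  (Fpoly p n).eval ((p:ℝ)^(m+1))
    / (((p:ℝ)^(m+1))^n * ∏ i ∈ Finset.range (n+1), ((p:ℝ)^(m+1) - vv p i))

noncomputable def St (p n : ℕ) : ℝ := ∑' m : ℕ, tS p n m

lemma sub_vv_pos (m i : ℕ) : 0 < x^(m+1) - vv p i := by
  have := vv_le_one hp i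
  have := one_lt_pow' hp m
  linarith

lemma St_term (n m : ℕ) :
    tS p n m = ∑ j ∈ Finset.range (n+1),
      cc p n j * (1/((x^(m+1))^n * (x^(m+1) - vv p j))) := by
  have htn : (0:ℝ) < (x^(m+1))^n := pow_pos (pow_pos (hx0 hp) _) _
  have hterm : ∀ j ∈ Finset.range (n+1),
      cc p n j * (1/((x^(m+1))^n * (x^(m+1) - vv p j)))
        = cc p n j * (∏ i ∈ (Finset.range (n+1)).erase j, (x^(m+1) - vv p i))
          / ((x^(m+1))^n * ∏ i ∈ Finset.range (n+1), (x^(m+1) - vv p i)) := by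
    intro j hj
    have hfull : (∏ i ∈ Finset.range (n+1), (x^(m+1) - vv p i))
        = (x^(m+1) - vv p j) * ∏ i ∈ (Finset.range (n+1)).erase j, (x^(m+1) - vv p i) :=
      (Finset.mul_prod_erase _ _ hj).symm
    have hep : (0:ℝ) < ∏ i ∈ (Finset.range (n+1)).erase j, (x^(m+1) - vv p i) :=
      Finset.prod_pos (fun i _ => sub_vv_pos hp m i)
    have hjp := sub_vv_pos hp m j
    rw [hfull, mul_one_div, div_eq_div_iff (by positivity) (by positivity)]
    ring
  rw [Finset.sum_congr rfl hterm, ← Finset.sum_div]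
  unfold tS
  rw [← lagrange_eval hp n (x^(m+1))]

lemma summable_cSig (n j : ℕ) :
    Summable (fun m : ℕ => cc p n j * (1/((x^(m+1))^n * (x^(m+1) - vv p j)))) := by
  have := (summable_Sig hp n j).mul_left (cc p n j)
  exact this.congr (fun m => by unfold vv; rfl)

lemma summable_tS (n : ℕ) : Summable (tS p n) := by
  have h : Summable (fun m => ∑ j ∈ Finset.range (n+1),
      cc p n j * (1/((x^(m+1))^n * (x^(m+1) - vv p j)))) :=
    summable_sum (fun j _ => summable_cSig hp n j)
  exact h.congr (fun m => (St_term hp n m).symm)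

lemma St_eq_sum (n : ℕ) : St p n = ∑ j ∈ Finset.range (n+1), cc p n j * Sig p n j := by
  unfold St
  rw [tsum_congr (fun m => St_term hp n m), Summable.tsum_finsetSum (fun j _ => summable_cSig hp n j)]
  apply Finset.sum_congr rfl
  intro j _
  rw [tsum_mul_left]
  unfold Sig vv
  rfl

lemma St_linear (n : ℕ) :
    St p n = (∑ j ∈ Finset.range (n+1), cc p n j * x^(j*(n+1))) * A p
      - ∑ j ∈ Finset.range (n+1), cc p n j * x^(j*(n+1)) * (Hs p j + Ks p n j) := by
  rw [St_eq_sum hp n]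
  have hterm : ∀ j ∈ Finset.range (n+1),
      cc p n j * Sig p n j
        = cc p n j * x^(j*(n+1)) * A p - cc p n j * x^(j*(n+1)) * (Hs p j + Ks p n j) := by
    intro j _
    rw [Sig_eq hp n j, G_eq hp n j]
    ring
  rw [Finset.sum_congr rfl hterm, Finset.sum_sub_distrib, ← Finset.sum_mul]



/-! ### Bounds on St -/

lemma Fpoly_eval_eq (n : ℕ) (t : ℝ) :
    (Fpoly p n).eval t = ∏ i ∈ Finset.range n, (t - x^(i+1)) := by
  unfold Fpoly
  rw [Polynomial.eval_prod]
  simp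

lemma tS_zero (n m : ℕ) (hm : m < n) : tS p n m = 0 := by
  unfold tS
  rw [Fpoly_eval_eq hp]
  rw [Finset.prod_eq_zero (Finset.mem_range.mpr hm) (by ring)]
  simp

lemma tS_nonneg (n m : ℕ) : 0 ≤ tS p n m := by
  rcases lt_or_ge m n with hm | hm
  · rw [tS_zero hp n m hm]
  · unfold tS
    apply div_nonneg
    · rw [Fpoly_eval_eq hp]
      apply Finset.prod_nonneg
      intro i hi
      simp only [Finset.mem_range] at hi
      have : (x:ℝ)^(i+1) ≤ x^(m+1) := pow_le_pow_right₀ (hx1 hp).le (by omega)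
      linarith
    · apply le_of_lt
      apply mul_pos (pow_pos (pow_pos (hx0 hp) _) _)
      exact Finset.prod_pos (fun i _ => sub_vv_pos hp m i)

lemma tS_pos (n : ℕ) : 0 < tS p n n := by
  unfold tS
  apply div_pos
  · rw [Fpoly_eval_eq hp]
    apply Finset.prod_pos
    intro i hi
    simp only [Finset.mem_range] at hi
    have : (x:ℝ)^(i+1) < x^(n+1) := pow_lt_pow_right₀ (hx1 hp) (by omega)
    linarith
  · apply mul_pos (pow_pos (pow_pos (hx0 hp) _) _)
    exact Finset.prod_pos (fun i _ => sub_vv_pos hp n i)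

lemma St_pos (n : ℕ) : 0 < St p n :=
  Summable.tsum_pos (summable_tS hp n) (fun m => tS_nonneg hp n m) n (tS_pos hp n)

lemma tS_le (n m : ℕ) (hm : n ≤ m) :
    tS p n m ≤ 2^(n+1) * ((x⁻¹)^(n+1))^(m+1) := by
  have ht1 : (1:ℝ) < x^(m+1) := one_lt_pow' hp m
  have ht0 : (0:ℝ) < x^(m+1) := lt_trans one_pos ht1
  have hnum : (Fpoly p n).eval (x^(m+1)) ≤ (x^(m+1))^n := by
    rw [Fpoly_eval_eq hp]
    calc (∏ i ∈ Finset.range n, (x^(m+1) - x^(i+1))) ≤ ∏ _i ∈ Finset.range n, x^(m+1) := by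
          apply Finset.prod_le_prod
          · intro i hi
            simp only [Finset.mem_range] at hi
            have : (x:ℝ)^(i+1) ≤ x^(m+1) := pow_le_pow_right₀ (hx1 hp).le (by omega)
            linarith
          · intro i _
            have hx : (0:ℝ) < x^(i+1) := pow_pos (hx0 hp) _
            linarith
    _ = (x^(m+1))^n := by rw [Finset.prod_const, Finset.card_range]
  have hden : (x^(m+1))^n * (x^(m+1)/2)^(n+1)
      ≤ (x^(m+1))^n * ∏ i ∈ Finset.range (n+1), (x^(m+1) - vv p i) := by
    apply mul_le_mul_of_nonneg_left _ (le_of_lt (pow_pos ht0 _))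
    calc (x^(m+1)/2)^(n+1) = ∏ _i ∈ Finset.range (n+1), (x^(m+1)/2) := by
          rw [Finset.prod_const, Finset.card_range]
    _ ≤ ∏ i ∈ Finset.range (n+1), (x^(m+1) - vv p i) := by
          apply Finset.prod_le_prod
          · intro i _; positivity
          · intro i _
            have h1 := vv_le_one hp i
            have h2 : (2:ℝ) ≤ x^(m+1) := by
              calc (2:ℝ) ≤ x := hx2 hp
              _ = x^1 := (pow_one _).symm
              _ ≤ x^(m+1) := pow_le_pow_right₀ (hx1 hp).le (by omega)
            linarith
  have hdpos : (0:ℝ) < (x^(m+1))^n * ∏ i ∈ Finset.range (n+1), (x^(m+1) - vv p i) := by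
    apply mul_pos (pow_pos ht0 _) (Finset.prod_pos (fun i _ => sub_vv_pos hp m i))
  have hd2 : (0:ℝ) < (x^(m+1))^n * (x^(m+1)/2)^(n+1) := by positivity
  calc tS p n m
      ≤ (x^(m+1))^n / ((x^(m+1))^n * ∏ i ∈ Finset.range (n+1), (x^(m+1) - vv p i)) := by
        unfold tS
        gcongr
  _ ≤ (x^(m+1))^n / ((x^(m+1))^n * (x^(m+1)/2)^(n+1)) :=
        div_le_div_of_nonneg_left (le_of_lt (pow_pos ht0 n)) hd2 hden
  _ = 2^(n+1) * ((x⁻¹)^(n+1))^(m+1) := by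
        rw [div_pow, inv_pow, inv_pow, ← pow_mul, ← pow_mul]
        field_simp
        ring


lemma St_le (n : ℕ) : St p n ≤ 2^(n+2) * (x⁻¹)^((n+1)*(n+1)) := by
  set r : ℝ := (x⁻¹)^(n+1) with hrdef
  have hr0 : (0:ℝ) ≤ r := by positivity
  have hxhalf : (x:ℝ)⁻¹ ≤ 1/2 := by
    rw [inv_le_comm₀ (hx0 hp) (by norm_num)]
    simpa using hx2 hp
  have hrhalf : r ≤ 1/2 := by
    calc r ≤ (1/2:ℝ)^(n+1) := pow_le_pow_left₀ (hxi0 hp).le hxhalf _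
    _ ≤ (1/2:ℝ)^1 := pow_le_pow_of_le_one (by norm_num) (by norm_num) (by omega)
    _ = 1/2 := pow_one _
  have hr1 : r < 1 := lt_of_le_of_lt hrhalf (by norm_num)
  have hSt2 : St p n = ∑' m : ℕ, tS p n (m+n) := by
    have h := Summable.sum_add_tsum_nat_add (f := tS p n) n (summable_tS hp n)
    have hz : ∑ i ∈ Finset.range n, tS p n i = 0 :=
      Finset.sum_eq_zero (fun i hi => tS_zero hp n i (Finset.mem_range.mp hi))
    unfold St
    linarith [h]
  have hbound : ∀ m : ℕ, tS p n (m+n) ≤ (2^(n+1) * r^(n+1)) * r^m := by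
    intro m
    have h := tS_le hp n (m+n) (by omega)
    have he : ((x⁻¹:ℝ)^(n+1))^(m+n+1) = r^(n+1) * r^m := by
      rw [hrdef, ← pow_add]
      congr 1
      omega
    rw [he] at h
    linarith [h]
  have hgeo : Summable (fun m : ℕ => (2^(n+1) * r^(n+1)) * r^m) :=
    (summable_geometric_of_lt_one hr0 hr1).mul_left _
  have hsum : Summable (fun m : ℕ => tS p n (m+n)) :=
    (summable_nat_add_iff n).mpr (summable_tS hp n)
  have h1 : St p n ≤ ∑' m : ℕ, (2^(n+1) * r^(n+1)) * r^m := by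
    rw [hSt2]
    exact Summable.tsum_le_tsum hbound hsum hgeo
  rw [tsum_mul_left, tsum_geometric_of_lt_one hr0 hr1] at h1
  have h2 : (1 - r)⁻¹ ≤ 2 := by
    have h3 : (1/2:ℝ) ≤ 1 - r := by linarith
    calc (1-r)⁻¹ ≤ (1/2:ℝ)⁻¹ := by
          apply inv_anti₀ (by norm_num) h3
    _ = 2 := by norm_num
  have h4 : (0:ℝ) ≤ 2^(n+1) * r^(n+1) := by positivity
  have h5 : St p n ≤ 2^(n+1) * r^(n+1) * 2 := by
    calc St p n ≤ 2^(n+1) * r^(n+1) * (1-r)⁻¹ := h1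
    _ ≤ 2^(n+1) * r^(n+1) * 2 := mul_le_mul_of_nonneg_left h2 h4
  calc St p n ≤ 2^(n+1) * r^(n+1) * 2 := h5
  _ = 2^(n+2) * (x⁻¹)^((n+1)*(n+1)) := by
      rw [hrdef, ← pow_mul]
      ring

lemma piR_le (n : ℕ) : ((piZ p n : ℤ):ℝ) ≤ x^(T n) := by
  rw [piR_eq hp]
  calc (∏ i ∈ Finset.range n, (x^(i+1) - 1)) ≤ ∏ i ∈ Finset.range n, x^(i+1) := by
        apply Finset.prod_le_prod
        · intro i _
          have := one_lt_pow' hp i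
          linarith
        · intro i _
          have hx : (0:ℝ) < x^(i+1) := pow_pos (hx0 hp) _
          linarith
  _ = x^(T n) := by
      rw [Finset.prod_pow_eq_pow_sum]
      rfl

/-! ### Integer forms -/

lemma vZ_eq (n : ℕ) :
    (((∑ j ∈ Finset.range (n+1), (-1)^(n+j) * dZ p n j * (p:ℤ)^(T (n-j) + j*(n+1))) : ℤ) : ℝ)
      = ∑ j ∈ Finset.range (n+1), cc p n j * x^(j*(n+1)) := by
  push_cast
  apply Finset.sum_congr rfl
  intro j _
  unfold cc
  rw [pow_add]
  ring

lemma wZ_spec (n k : ℕ) (hk : k < n) :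
    ((piZ p n : ℤ):ℝ) = (x^(k+1) - 1) * ((wZ p n k : ℤ):ℝ) := by
  have h : piZ p n = ((p:ℤ)^(k+1) - 1) * wZ p n k :=
    (Finset.mul_prod_erase (Finset.range n) _ (Finset.mem_range.mpr hk)).symm
  rw [h]
  push_cast
  ring

lemma PiK (n j k : ℕ) (hj : j ≤ n) (hk : k < n) :
    ((piZ p n:ℤ):ℝ) * (x^(j*(n+1)) * (1/((x^(k+1))^j * (x^(k+1)-1))))
      = x^(j*(n-k)) * ((wZ p n k:ℤ):ℝ) := by
  have h1 : (1:ℝ) < x^(k+1) := one_lt_pow' hp k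
  have h2 : x^(k+1) - 1 ≠ 0 := by linarith
  have h3 : ((x:ℝ)^(k+1))^j ≠ 0 := by positivity
  have hexp : (x:ℝ)^(j*(n+1)) = x^(j*(n-k)) * (x^(k+1))^j := by
    rw [← pow_mul, ← pow_add]
    congr 1
    have : n - k + (k+1) = n+1 := by omega
    calc j*(n+1) = j*((n-k) + (k+1)) := by rw [this]
    _ = j*(n-k) + (k+1)*j := by ring
  rw [wZ_spec hp n k hk, hexp]
  field_simp

lemma wz_eq (n : ℕ) :
    (((∑ j ∈ Finset.range (n+1), (-1)^(n+j) * dZ p n j *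
        ((p:ℤ)^(T (n-j) + j*(n+1)) * (∑ i ∈ Finset.range j, wZ p n i)
          + ∑ k ∈ Finset.range n, (p:ℤ)^(T (n-j) + j*(n-k)) * wZ p n k)) : ℤ) : ℝ)
      = ((piZ p n:ℤ):ℝ)
        * ∑ j ∈ Finset.range (n+1), cc p n j * x^(j*(n+1)) * (Hs p j + Ks p n j) := by
  rw [Finset.mul_sum]
  push_cast
  apply Finset.sum_congr rfl
  intro j hj
  simp only [Finset.mem_range] at hj
  have hH : ((piZ p n:ℤ):ℝ) * Hs p j = ∑ i ∈ Finset.range j, ((wZ p n i:ℤ):ℝ) := by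
    unfold Hs
    rw [Finset.mul_sum]
    apply Finset.sum_congr rfl
    intro i hi
    simp only [Finset.mem_range] at hi
    have hi' : i < n := by omega
    have h1 : (1:ℝ) < x^(i+1) := one_lt_pow' hp i
    have h2 : (x:ℝ)^(i+1) - 1 ≠ 0 := by linarith
    rw [wZ_spec hp n i hi']
    field_simp
  have hK : x^(j*(n+1)) * (((piZ p n:ℤ):ℝ) * Ks p n j)
      = ∑ k ∈ Finset.range n, x^(j*(n-k)) * ((wZ p n k:ℤ):ℝ) := by
    unfold Ks
    rw [Finset.mul_sum, Finset.mul_sum]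
    apply Finset.sum_congr rfl
    intro k hk
    simp only [Finset.mem_range] at hk
    have := PiK hp n j k (by omega) hk
    calc x^(j*(n+1)) * (((piZ p n:ℤ):ℝ) * (1/((x^(k+1))^j * (x^(k+1)-1))))
        = ((piZ p n:ℤ):ℝ) * (x^(j*(n+1)) * (1/((x^(k+1))^j * (x^(k+1)-1)))) := by ring
    _ = x^(j*(n-k)) * ((wZ p n k:ℤ):ℝ) := this
  unfold cc
  have hgoal : ((piZ p n:ℤ):ℝ) * ((-1)^(n+j) * x^(T (n-j)) * ((dZ p n j:ℤ):ℝ) * x^(j*(n+1))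
      * (Hs p j + Ks p n j))
      = (-1)^(n+j) * ((dZ p n j:ℤ):ℝ)
        * (x^(T (n-j)) * x^(j*(n+1)) * (((piZ p n:ℤ):ℝ) * Hs p j)
          + x^(T (n-j)) * (x^(j*(n+1)) * (((piZ p n:ℤ):ℝ) * Ks p n j))) := by ring
  have hKs : ∀ k ∈ Finset.range n,
      x^(T (n-j)) * (x^(j*(n-k)) * ((wZ p n k:ℤ):ℝ))
        = x^(T (n-j) + j*(n-k)) * ((wZ p n k:ℤ):ℝ) := by
    intro k _
    rw [pow_add]
    ring
  rw [hgoal, hH, hK, ← pow_add, Finset.mul_sum, Finset.mul_sum, Finset.sum_congr rfl hKs]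


end Real

end QH

theorem stmt_16 (p : ℕ) (hp : 2 ≤ p) :
    Irrational (∑' k : ℕ, (1 / p : ℝ) ^ (k + 1) / (1 - (1 / p : ℝ) ^ (k + 1))) := by
  have hx1 : (1:ℝ) < (p:ℝ) := QH.hx1 hp
  have hx0 : (0:ℝ) < (p:ℝ) := QH.hx0 hp
  have hcong : ∀ k : ℕ, (1 / p : ℝ) ^ (k + 1) / (1 - (1 / p : ℝ) ^ (k + 1))
      = 1/((p:ℝ)^(k+1) - 1) := by
    intro k
    have hy : (1:ℝ) < (p:ℝ)^(k+1) := QH.one_lt_pow' hp k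
    have hlt : ((1:ℝ)/p)^(k+1) < 1 := by
      rw [one_div]
      exact pow_lt_one₀ (QH.hxi0 hp).le (QH.hxi1 hp) (by omega)
    have hne : 1 - ((1:ℝ)/p)^(k+1) ≠ 0 := by linarith
    have hy1 : (p:ℝ)^(k+1) - 1 ≠ 0 := by linarith
    rw [div_eq_div_iff hne hy1]
    have hinv : ((1:ℝ)/p)^(k+1) * (p:ℝ)^(k+1) = 1 := by
      rw [one_div, ← mul_pow, inv_mul_cancel₀ (ne_of_gt hx0), one_pow]
    linear_combination hinv
  rw [tsum_congr hcong]
  have hA : (∑' k : ℕ, 1/((p:ℝ)^(k+1) - 1)) = QH.A p := rfl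
  rw [hA]
  rintro ⟨r, hr⟩
  set b := r.den with hbdef
  set a := r.num with hadef
  have hb : 0 < b := r.pos
  have hab : (a:ℝ) = QH.A p * b := by
    rw [← hr, Rat.cast_def]
    field_simp
    rfl
  set n := b + 1 with hn
  set zv : ℤ := ∑ j ∈ Finset.range (n+1), (-1)^(n+j) * QH.dZ p n j * (p:ℤ)^(QH.T (n-j) + j*(n+1))
    with hzv
  set zw : ℤ := ∑ j ∈ Finset.range (n+1), (-1)^(n+j) * QH.dZ p n j *
        ((p:ℤ)^(QH.T (n-j) + j*(n+1)) * (∑ i ∈ Finset.range j, QH.wZ p n i)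
          + ∑ k ∈ Finset.range n, (p:ℤ)^(QH.T (n-j) + j*(n-k)) * QH.wZ p n k) with hzw
  have hver := QH.vZ_eq hp n
  have hw := QH.wz_eq hp n
  have hlin := QH.St_linear hp n
  rw [← hver] at hlin
  have key : ((QH.piZ p n:ℤ):ℝ) * QH.St p n
      = ((QH.piZ p n:ℤ):ℝ) * ((zv:ℤ):ℝ) * QH.A p - ((zw:ℤ):ℝ) := by
    rw [hlin]
    rw [hw]
    ring
  set z : ℤ := QH.piZ p n * zv * a - zw * (b:ℤ) with hz
  have hzr : (z:ℝ) = (b:ℝ) * (((QH.piZ p n:ℤ):ℝ) * QH.St p n) := by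
    rw [key, hz]
    push_cast
    rw [hab]
    ring
  have hpiR : (0:ℝ) < ((QH.piZ p n:ℤ):ℝ) := QH.piR_pos hp n
  have hStpos : 0 < QH.St p n := QH.St_pos hp n
  have hbR : (0:ℝ) < (b:ℝ) := by exact_mod_cast hb
  have hzpos : (0:ℝ) < (z:ℝ) := by
    rw [hzr]
    positivity
  have hz1 : (1:ℝ) ≤ (z:ℝ) := by
    have : 0 < z := by exact_mod_cast hzpos
    exact_mod_cast this
  -- upper bound
  have hSt := QH.St_le hp n
  have hpiLe := QH.piR_le hp n
  have hT := QH.T_le n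
  have hsq : (n+1)*(n+1) = n*n + 2*n + 1 := by ring
  have hbn : (b:ℝ) < 2^b := by
    exact_mod_cast Nat.lt_two_pow_self (n := b)
  have h2x : (2:ℝ) ≤ (p:ℝ) := QH.hx2 hp
  have hlt : (b:ℝ) * (p:ℝ)^(QH.T n) * 2^(n+2) < (p:ℝ)^((n+1)*(n+1)) := by
    have s1 : (b:ℝ) * (p:ℝ)^(QH.T n) * 2^(n+2) < 2^b * (p:ℝ)^(QH.T n) * 2^(n+2) := by
      apply mul_lt_mul_of_pos_right (mul_lt_mul_of_pos_right hbn (by positivity)) (by positivity)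
    have s2 : (2:ℝ)^b * (p:ℝ)^(QH.T n) * 2^(n+2) ≤ (p:ℝ)^b * (p:ℝ)^(QH.T n) * (p:ℝ)^(n+2) := by
      apply mul_le_mul
      · apply mul_le_mul_of_nonneg_right (pow_le_pow_left₀ (by norm_num) h2x b) (by positivity)
      · exact pow_le_pow_left₀ (by norm_num) h2x (n+2)
      · positivity
      · positivity
    have s3 : (p:ℝ)^b * (p:ℝ)^(QH.T n) * (p:ℝ)^(n+2) = (p:ℝ)^(b + QH.T n + (n+2)) := by
      rw [← pow_add, ← pow_add]
    have s4 : (p:ℝ)^(b + QH.T n + (n+2)) ≤ (p:ℝ)^((n+1)*(n+1)) := by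
      apply pow_le_pow_right₀ hx1.le
      omega
    linarith
  have hub : (b:ℝ) * (((QH.piZ p n:ℤ):ℝ) * QH.St p n) < 1 := by
    have hE : ((p:ℝ)⁻¹)^((n+1)*(n+1)) = ((p:ℝ)^((n+1)*(n+1)))⁻¹ := inv_pow _ _
    have hEpos : (0:ℝ) < (p:ℝ)^((n+1)*(n+1)) := by positivity
    have c1 : (b:ℝ) * (((QH.piZ p n:ℤ):ℝ) * QH.St p n)
        ≤ (b:ℝ) * ((p:ℝ)^(QH.T n) * QH.St p n) := by
      apply mul_le_mul_of_nonneg_left (mul_le_mul_of_nonneg_right hpiLe hStpos.le) hbR.le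
    have c2 : (b:ℝ) * ((p:ℝ)^(QH.T n) * QH.St p n)
        ≤ (b:ℝ) * ((p:ℝ)^(QH.T n) * (2^(n+2) * ((p:ℝ)^((n+1)*(n+1)))⁻¹)) := by
      apply mul_le_mul_of_nonneg_left _ hbR.le
      apply mul_le_mul_of_nonneg_left _ (by positivity)
      rw [← hE]
      exact hSt
    have c3 : (b:ℝ) * ((p:ℝ)^(QH.T n) * (2^(n+2) * ((p:ℝ)^((n+1)*(n+1)))⁻¹))
        = ((b:ℝ) * (p:ℝ)^(QH.T n) * 2^(n+2)) * ((p:ℝ)^((n+1)*(n+1)))⁻¹ := by ring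
    have c4 : ((b:ℝ) * (p:ℝ)^(QH.T n) * 2^(n+2)) * ((p:ℝ)^((n+1)*(n+1)))⁻¹
        < (p:ℝ)^((n+1)*(n+1)) * ((p:ℝ)^((n+1)*(n+1)))⁻¹ :=
      mul_lt_mul_of_pos_right hlt (inv_pos.mpr hEpos)
    have c5 : (p:ℝ)^((n+1)*(n+1)) * ((p:ℝ)^((n+1)*(n+1)))⁻¹ = 1 :=
      mul_inv_cancel₀ (ne_of_gt hEpos)
    linarith
  rw [hzr] at hz1
  linarith
end
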